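/- arXiv:2505.10377 — 9 statements merged into one kernel-verified Lean document; each statement's English description precedes it below -/
import Mathlib

section
/- (Theorem 3, 'Informative + threshold equilibrium'.) Fix a voting environment as below, with 0-1 utilities. Let {Σ*_n} be any constantly separable sequence of informative+threshold two-round profiles. Then (1) lim_{n→∞} A(Σ*_n) = 1, and (2) there exists a sequence of nonnegative reals ε_n with lim_{n→∞} ε_n = 0 such that for every n, Σ*_n is an ε_n-strong Bayes Nash equilibrium of the n-agent two-round voting game. -/
noncomputable section
open Classical Finset Filter
open scoped Classical

namespace TwoRoundVoting

/-- Number of friendly agents among `n` agents. -/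
def numF (alphaF : ℝ) (n : ℕ) : ℕ := ⌊alphaF * n⌋₊

/-- Number of unfriendly agents among `n` agents. -/
def numU (alphaU : ℝ) (n : ℕ) : ℕ := ⌊alphaU * n⌋₊

/-- Number of contingent agents among `n` agents. -/
def numC (alphaF alphaU : ℝ) (n : ℕ) : ℕ := n - numF alphaF n - numU alphaU n

/-- A (behavioral) strategy profile in the two-round voting game with `n` agents.
`s1 i m` is the probability that agent `i` votes `A` in the first round upon signal `m`
(`true` = signal `h`, `false` = signal `l`); `s2 i m x` is the probability that agent `i`
votes `A` in the second round upon signal `m` when the announced number of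
first-round `A`-votes is `x`. -/
structure TwoRound (n : ℕ) where
  s1 : Fin n → Bool → ℝ
  s2 : Fin n → Bool → ℕ → ℝ
  s1_nonneg : ∀ i m, 0 ≤ s1 i m
  s1_le_one : ∀ i m, s1 i m ≤ 1
  s2_nonneg : ∀ i m x, 0 ≤ s2 i m x
  s2_le_one : ∀ i m x, s2 i m x ≤ 1

/-- Probability of signal `h` in world state `k` (`true` = `H`, `false` = `L`). -/
def sigP (phH phL : ℝ) (k : Bool) : ℝ := if k then phH else phL

/-- Probability of the signal vector `s` conditioned on world state `k`
(signals are i.i.d. conditioned on the state). -/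
def sigWeight (phH phL : ℝ) (k : Bool) {n : ℕ} (s : Fin n → Bool) : ℝ :=
  ∏ i, if s i then sigP phH phL k else 1 - sigP phH phL k

/-- Number of `A`-votes in a vote vector. -/
def countA {n : ℕ} (v : Fin n → Bool) : ℕ :=
  (Finset.univ.filter fun i => v i = true).card

/-- Probability that alternative `A` wins (i.e. gets strictly more than `n/2`
second-round votes) conditioned on the world state `k`, under profile `σ`. -/
def prAwins (phH phL : ℝ) {n : ℕ} (σ : TwoRound n) (k : Bool) : ℝ :=
  ∑ s : Fin n → Bool, ∑ v1 : Fin n → Bool, ∑ v2 : Fin n → Bool,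
    sigWeight phH phL k s *
      (∏ i, if v1 i then σ.s1 i (s i) else 1 - σ.s1 i (s i)) *
      (∏ i, if v2 i then σ.s2 i (s i) (countA v1) else 1 - σ.s2 i (s i) (countA v1)) *
      (if 2 * countA v2 > n then 1 else 0)

/-- Fidelity of a profile: probability that the informed majority decision is reached. -/
def fidelity (PH PL phH phL : ℝ) {n : ℕ} (σ : TwoRound n) : ℝ :=
  PL * (1 - prAwins phH phL σ false) + PH * prAwins phH phL σ true

/-- Expected 0-1 utility of agent `i`: the first `numF` agents are friendly,
the next `numU` are unfriendly, and the remaining agents are contingent. -/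
def util (PH PL phH phL alphaF alphaU : ℝ) {n : ℕ} (σ : TwoRound n) (i : Fin n) : ℝ :=
  if (i : ℕ) < numF alphaF n then
    PH * prAwins phH phL σ true + PL * prAwins phH phL σ false
  else if (i : ℕ) < numF alphaF n + numU alphaU n then
    PH * (1 - prAwins phH phL σ true) + PL * (1 - prAwins phH phL σ false)
  else
    fidelity PH PL phH phL σ

/-- `σ` is an `ε`-strong Bayes Nash equilibrium: no coalition `D` can deviate so that
every member weakly gains and some member gains more than `ε`. -/
def IsEpsStrongBNE (PH PL phH phL alphaF alphaU : ℝ) {n : ℕ} (σ : TwoRound n) (ε : ℝ) :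
    Prop :=
  ¬ ∃ (D : Finset (Fin n)) (σ' : TwoRound n),
      (∀ i, i ∉ D → σ'.s1 i = σ.s1 i ∧ σ'.s2 i = σ.s2 i) ∧
      (∀ i ∈ D, util PH PL phH phL alphaF alphaU σ i ≤
        util PH PL phH phL alphaF alphaU σ' i) ∧
      (∃ i ∈ D, util PH PL phH phL alphaF alphaU σ i + ε <
        util PH PL phH phL alphaF alphaU σ' i)


/-- The "informative + threshold" strategy profile with thresholds `T i` (one real
threshold per agent, used only by contingent agents): friendly agents always vote `A`,
unfriendly agents always vote `R`, and contingent agent `i` votes its signal in the first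
round and votes `A` in the second round iff the first-round outcome `x` satisfies
`x ≥ T i`. -/
def thresholdProfile (alphaF alphaU : ℝ) (n : ℕ) (T : Fin n → ℝ) : TwoRound n where
  s1 := fun i m =>
    if (i : ℕ) < numF alphaF n then 1
    else if (i : ℕ) < numF alphaF n + numU alphaU n then 0
    else if m then 1 else 0
  s2 := fun i _m x =>
    if (i : ℕ) < numF alphaF n then 1
    else if (i : ℕ) < numF alphaF n + numU alphaU n then 0
    else if T i ≤ (x : ℝ) then 1 else 0
  s1_nonneg := by intro i m; (try dsimp only); split_ifs <;> norm_num
  s1_le_one := by intro i m; (try dsimp only); split_ifs <;> norm_num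
  s2_nonneg := by intro i m x; (try dsimp only); split_ifs <;> norm_num
  s2_le_one := by intro i m x; (try dsimp only); split_ifs <;> norm_num

/-- A sequence of thresholds is constantly separable if, for some `δ > 0` and all large
`n`, every contingent agent's threshold lies between `n_F + n_C·P_hL + δn` and
`n_F + n_C·P_hH − δn`. -/
def ConstantlySeparable (phH phL alphaF alphaU : ℝ) (T : ∀ n : ℕ, Fin n → ℝ) : Prop :=
  ∃ (n₀ : ℕ) (δ : ℝ), 0 < δ ∧ ∀ n, n₀ ≤ n → ∀ i : Fin n,
    numF alphaF n + numU alphaU n ≤ (i : ℕ) →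
      (numF alphaF n : ℝ) + (numC alphaF alphaU n : ℝ) * phL + δ * n ≤ T n i ∧
      T n i ≤ (numF alphaF n : ℝ) + (numC alphaF alphaU n : ℝ) * phH - δ * n


section Aux

theorem sum_pi_bool {n : ℕ} (g : Fin n → Bool → ℝ) :
    ∑ s : Fin n → Bool, ∏ i, g i (s i) = ∏ i, (g i true + g i false) := by
  classical
  rw [Finset.prod_congr rfl (fun i _ => (Fintype.sum_bool (g i)).symm),
    Finset.prod_univ_sum, Fintype.piFinset_univ]

variable {phH phL : ℝ}

lemma sigP_mem {k : Bool} (h0 : 0 ≤ phL) (h1 : phL ≤ phH) (h2 : phH ≤ 1) :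
    0 ≤ sigP phH phL k ∧ sigP phH phL k ≤ 1 := by
  cases k <;> constructor <;> simp [sigP] <;> linarith

lemma sigWeight_nonneg {n : ℕ} {k : Bool} (hp0 : 0 ≤ sigP phH phL k)
    (hp1 : sigP phH phL k ≤ 1) (s : Fin n → Bool) : 0 ≤ sigWeight phH phL k s := by
  refine Finset.prod_nonneg fun i _ => ?_
  split <;> linarith

lemma sum_sigWeight (n : ℕ) (k : Bool) :
    ∑ s : Fin n → Bool, sigWeight phH phL k s = 1 :=
  calc ∑ s : Fin n → Bool, sigWeight phH phL k s
      = ∏ _i : Fin n, ((if (true : Bool) then sigP phH phL k else 1 - sigP phH phL k)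
          + (if (false : Bool) then sigP phH phL k else 1 - sigP phH phL k)) :=
        sum_pi_bool (fun _ b => if b then sigP phH phL k else 1 - sigP phH phL k)
    _ = 1 := by simp

lemma E_pi {n : ℕ} (k : Bool) (g : Fin n → Bool → ℝ) :
    ∑ s : Fin n → Bool, sigWeight phH phL k s * ∏ i, g i (s i)
      = ∏ i, (sigP phH phL k * g i true + (1 - sigP phH phL k) * g i false) := by
  have h : ∀ s : Fin n → Bool, sigWeight phH phL k s * ∏ i, g i (s i)
      = ∏ i, ((if s i then sigP phH phL k else 1 - sigP phH phL k) * g i (s i)) := by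
    intro s; rw [sigWeight, ← Finset.prod_mul_distrib]
  rw [Finset.sum_congr rfl fun s _ => h s]
  calc ∑ s : Fin n → Bool, ∏ i, ((if s i then sigP phH phL k else 1 - sigP phH phL k) * g i (s i))
      = ∏ i : Fin n, ((if (true : Bool) then sigP phH phL k else 1 - sigP phH phL k) * g i true
          + (if (false : Bool) then sigP phH phL k else 1 - sigP phH phL k) * g i false) :=
        sum_pi_bool (fun i b => (if b then sigP phH phL k else 1 - sigP phH phL k) * g i b)
    _ = _ := by simp

lemma prod_one_coord {n : ℕ} (a : Fin n) (c : ℝ) :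
    (∏ i : Fin n, (if i = a then c else 1)) = c := by
  rw [Finset.prod_ite_eq' Finset.univ a fun _ => c]
  simp

lemma prod_two_coord {n : ℕ} {a b : Fin n} (hab : a ≠ b) (c₁ c₂ : ℝ) :
    (∏ i : Fin n, (if i = a then c₁ else if i = b then c₂ else 1)) = c₁ * c₂ := by
  have h : ∀ i : Fin n, (if i = a then c₁ else if i = b then c₂ else 1)
      = (if i = a then c₁ else 1) * (if i = b then c₂ else 1) := by
    intro i
    rcases eq_or_ne i a with rfl | ha
    · simp [hab]
    · simp [ha]
  rw [Finset.prod_congr rfl fun i _ => h i, Finset.prod_mul_distrib,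
    prod_one_coord, prod_one_coord]

lemma prod_coord_eval {n : ℕ} (a : Fin n) (s : Fin n → Bool) (F : Bool → ℝ) :
    (∏ i, (if i = a then F (s i) else 1)) = F (s a) := by
  have h : ∀ i : Fin n, (if i = a then F (s i) else 1) = (if i = a then F (s a) else 1) := by
    intro i
    rcases eq_or_ne i a with rfl | h
    · simp
    · simp [h]
  rw [Finset.prod_congr rfl fun i _ => h i, prod_one_coord]

lemma E_coord_single {n : ℕ} (k : Bool) (a : Fin n) (F : Bool → ℝ) :
    ∑ s : Fin n → Bool, sigWeight phH phL k s * F (s a)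
      = sigP phH phL k * F true + (1 - sigP phH phL k) * F false :=
  calc ∑ s : Fin n → Bool, sigWeight phH phL k s * F (s a)
      = ∑ s : Fin n → Bool, sigWeight phH phL k s * ∏ i, (if i = a then F (s i) else 1) :=
        Finset.sum_congr rfl fun s _ => by rw [prod_coord_eval]
    _ = ∏ i : Fin n, (sigP phH phL k * (if i = a then F true else 1)
          + (1 - sigP phH phL k) * (if i = a then F false else 1)) :=
        E_pi k (fun i b => if i = a then F b else 1)
    _ = ∏ i : Fin n, (if i = a then (sigP phH phL k * F true + (1 - sigP phH phL k) * F false) else 1) :=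
        Finset.prod_congr rfl fun i _ => by split_ifs <;> ring
    _ = _ := prod_one_coord _ _

lemma prod_coord_eval2 {n : ℕ} {a b : Fin n} (hab : a ≠ b) (s : Fin n → Bool) (F G : Bool → ℝ) :
    (∏ i, (if i = a then F (s i) else if i = b then G (s i) else 1)) = F (s a) * G (s b) := by
  have h : ∀ i : Fin n, (if i = a then F (s i) else if i = b then G (s i) else 1)
      = (if i = a then F (s a) else if i = b then G (s b) else 1) := by
    intro i
    rcases eq_or_ne i a with rfl | h1
    · simp
    · rcases eq_or_ne i b with rfl | h2
      · simp [h1]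
      · simp [h1, h2]
  rw [Finset.prod_congr rfl fun i _ => h i, prod_two_coord hab]

lemma E_coord_pair {n : ℕ} (k : Bool) {a b : Fin n} (hab : a ≠ b) (F G : Bool → ℝ) :
    ∑ s : Fin n → Bool, sigWeight phH phL k s * (F (s a) * G (s b))
      = (sigP phH phL k * F true + (1 - sigP phH phL k) * F false)
        * (sigP phH phL k * G true + (1 - sigP phH phL k) * G false) :=
  calc ∑ s : Fin n → Bool, sigWeight phH phL k s * (F (s a) * G (s b))
      = ∑ s : Fin n → Bool, sigWeight phH phL k s
          * ∏ i, (if i = a then F (s i) else if i = b then G (s i) else 1) :=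
        Finset.sum_congr rfl fun s _ => by rw [prod_coord_eval2 hab]
    _ = ∏ i : Fin n, (sigP phH phL k * (if i = a then F true else if i = b then G true else 1)
          + (1 - sigP phH phL k) * (if i = a then F false else if i = b then G false else 1)) :=
        E_pi k (fun i c => if i = a then F c else if i = b then G c else 1)
    _ = ∏ i : Fin n, (if i = a then (sigP phH phL k * F true + (1 - sigP phH phL k) * F false)
          else if i = b then (sigP phH phL k * G true + (1 - sigP phH phL k) * G false) else 1) :=
        Finset.prod_congr rfl fun i _ => by split_ifs <;> ring
    _ = _ := prod_two_coord hab _ _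

end Aux

section Cheb

variable {phH phL : ℝ}

/-- Expectation of the squared deviation of the number of `true` signals in `C`. -/
lemma variance_eq {n : ℕ} (k : Bool) (C : Finset (Fin n)) :
    ∑ s : Fin n → Bool, sigWeight phH phL k s
        * (((C.filter fun i => s i).card : ℝ) - sigP phH phL k * C.card) ^ 2
      = C.card * (sigP phH phL k * (1 - sigP phH phL k)) := by
  classical
  set p := sigP phH phL k with hp
  have hdev : ∀ s : Fin n → Bool,
      ((C.filter fun i => s i).card : ℝ) - p * C.card
        = ∑ a ∈ C, ((if s a then (1:ℝ) else 0) - p) := by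
    intro s
    rw [Finset.sum_sub_distrib, Finset.sum_const, nsmul_eq_mul]
    congr 1
    · rw [Finset.card_filter]
      push_cast
      rfl
    · ring
  have hsq : ∀ s : Fin n → Bool,
      (((C.filter fun i => s i).card : ℝ) - p * C.card) ^ 2
        = ∑ a ∈ C, ∑ b ∈ C, ((if s a then (1:ℝ) else 0) - p) * ((if s b then (1:ℝ) else 0) - p) := by
    intro s
    rw [hdev, sq, Finset.sum_mul_sum]
  calc ∑ s : Fin n → Bool, sigWeight phH phL k s
        * (((C.filter fun i => s i).card : ℝ) - p * C.card) ^ 2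
      = ∑ s : Fin n → Bool, ∑ a ∈ C, ∑ b ∈ C, sigWeight phH phL k s
          * (((if s a then (1:ℝ) else 0) - p) * ((if s b then (1:ℝ) else 0) - p)) := by
        refine Finset.sum_congr rfl fun s _ => ?_
        rw [hsq, Finset.mul_sum]
        refine Finset.sum_congr rfl fun a _ => ?_
        rw [Finset.mul_sum]
    _ = ∑ a ∈ C, ∑ b ∈ C, ∑ s : Fin n → Bool, sigWeight phH phL k s
          * (((if s a then (1:ℝ) else 0) - p) * ((if s b then (1:ℝ) else 0) - p)) := by
        rw [Finset.sum_comm]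
        refine Finset.sum_congr rfl fun a _ => Finset.sum_comm
    _ = ∑ a ∈ C, ∑ b ∈ C, (if a = b then p * (1 - p) else 0) := by
        refine Finset.sum_congr rfl fun a _ => Finset.sum_congr rfl fun b _ => ?_
        rcases eq_or_ne a b with rfl | hab
        · rw [if_pos rfl]
          have := E_coord_single (phH := phH) (phL := phL) k a
            (fun c => ((if c then (1:ℝ) else 0) - p) ^ 2)
          simp only [if_true, if_false] at this
          calc ∑ s : Fin n → Bool, sigWeight phH phL k s
                * (((if s a then (1:ℝ) else 0) - p) * ((if s a then (1:ℝ) else 0) - p)) =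
              ∑ s : Fin n → Bool, sigWeight phH phL k s
                * (((if s a then (1:ℝ) else 0) - p)) ^ 2 := by
                refine Finset.sum_congr rfl fun s _ => by ring
            _ = p * ((1:ℝ) - p) ^ 2 + (1 - p) * ((0:ℝ) - p) ^ 2 := this
            _ = p * (1 - p) := by ring
        · rw [if_neg hab]
          have := E_coord_pair (phH := phH) (phL := phL) k hab
            (fun c => (if c then (1:ℝ) else 0) - p) (fun c => (if c then (1:ℝ) else 0) - p)
          rw [this]
          simp only [Bool.false_eq_true, if_true, if_false]
          ring
    _ = ∑ a ∈ C, p * (1 - p) := by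
        refine Finset.sum_congr rfl fun a ha => ?_
        rw [Finset.sum_ite_eq C a fun _ => p * (1 - p), if_pos ha]
    _ = C.card * (p * (1 - p)) := by
        rw [Finset.sum_const, nsmul_eq_mul]

/-- Chebyshev-type tail bound. -/
lemma cheb_bound {n : ℕ} {k : Bool} (hp0 : 0 ≤ sigP phH phL k) (hp1 : sigP phH phL k ≤ 1)
    (C : Finset (Fin n)) {t : ℝ} (ht : 0 < t) (Bad : Finset (Fin n → Bool))
    (hBad : ∀ s ∈ Bad, t ≤ |((C.filter fun i => s i).card : ℝ) - sigP phH phL k * C.card|) :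
    ∑ s ∈ Bad, sigWeight phH phL k s
      ≤ C.card * (sigP phH phL k * (1 - sigP phH phL k)) / t ^ 2 := by
  classical
  set p := sigP phH phL k
  have h1 : ∑ s ∈ Bad, sigWeight phH phL k s
      ≤ ∑ s ∈ Bad, sigWeight phH phL k s
          * ((((C.filter fun i => s i).card : ℝ) - p * C.card) ^ 2 / t ^ 2) := by
    refine Finset.sum_le_sum fun s hs => ?_
    have hw := sigWeight_nonneg (n := n) hp0 hp1 s
    have habs := hBad s hs
    have ht2 : t ^ 2 ≤ (((C.filter fun i => s i).card : ℝ) - p * C.card) ^ 2 := by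
      have := sq_abs (((C.filter fun i => s i).card : ℝ) - p * C.card)
      nlinarith [abs_nonneg (((C.filter fun i => s i).card : ℝ) - p * C.card)]
    have : (1:ℝ) ≤ (((C.filter fun i => s i).card : ℝ) - p * C.card) ^ 2 / t ^ 2 := by
      rw [le_div_iff₀ (by positivity)]
      linarith
    nlinarith
  have h2 : ∑ s ∈ Bad, sigWeight phH phL k s
        * ((((C.filter fun i => s i).card : ℝ) - p * C.card) ^ 2 / t ^ 2)
      ≤ ∑ s : Fin n → Bool, sigWeight phH phL k s
        * ((((C.filter fun i => s i).card : ℝ) - p * C.card) ^ 2 / t ^ 2) := by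
    refine Finset.sum_le_sum_of_subset_of_nonneg (Finset.subset_univ _) fun s _ _ => ?_
    have hw := sigWeight_nonneg (n := n) hp0 hp1 s
    positivity
  have h3 : ∑ s : Fin n → Bool, sigWeight phH phL k s
        * ((((C.filter fun i => s i).card : ℝ) - p * C.card) ^ 2 / t ^ 2)
      = C.card * (p * (1 - p)) / t ^ 2 := by
    rw [← variance_eq k C, Finset.sum_div]
    refine Finset.sum_congr rfl fun s _ => by ring
  linarith

end Cheb

section Master

variable {phH phL : ℝ}

/-- First-round probability factor. -/
def pr1 {n : ℕ} (σ : TwoRound n) (s v1 : Fin n → Bool) : ℝ :=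
  ∏ i, if v1 i then σ.s1 i (s i) else 1 - σ.s1 i (s i)

/-- Second-round probability factor. -/
def pr2 {n : ℕ} (σ : TwoRound n) (s v1 v2 : Fin n → Bool) : ℝ :=
  ∏ i, if v2 i then σ.s2 i (s i) (countA v1) else 1 - σ.s2 i (s i) (countA v1)

lemma pr1_nonneg {n : ℕ} (σ : TwoRound n) (s v1 : Fin n → Bool) : 0 ≤ pr1 σ s v1 := by
  refine Finset.prod_nonneg fun i _ => ?_
  have h1 := σ.s1_nonneg i (s i); have h2 := σ.s1_le_one i (s i)
  split <;> linarith

lemma pr2_nonneg {n : ℕ} (σ : TwoRound n) (s v1 v2 : Fin n → Bool) : 0 ≤ pr2 σ s v1 v2 := by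
  refine Finset.prod_nonneg fun i _ => ?_
  have h1 := σ.s2_nonneg i (s i) (countA v1); have h2 := σ.s2_le_one i (s i) (countA v1)
  split <;> linarith

lemma sum_pr1 {n : ℕ} (σ : TwoRound n) (s : Fin n → Bool) :
    ∑ v1 : Fin n → Bool, pr1 σ s v1 = 1 :=
  calc ∑ v1 : Fin n → Bool, pr1 σ s v1
      = ∏ i : Fin n, ((if (true : Bool) then σ.s1 i (s i) else 1 - σ.s1 i (s i))
          + (if (false : Bool) then σ.s1 i (s i) else 1 - σ.s1 i (s i))) :=
        sum_pi_bool (fun i b => if b then σ.s1 i (s i) else 1 - σ.s1 i (s i))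
    _ = 1 := by simp

lemma sum_pr2 {n : ℕ} (σ : TwoRound n) (s v1 : Fin n → Bool) :
    ∑ v2 : Fin n → Bool, pr2 σ s v1 v2 = 1 :=
  calc ∑ v2 : Fin n → Bool, pr2 σ s v1 v2
      = ∏ i : Fin n, ((if (true : Bool) then σ.s2 i (s i) (countA v1) else 1 - σ.s2 i (s i) (countA v1))
          + (if (false : Bool) then σ.s2 i (s i) (countA v1) else 1 - σ.s2 i (s i) (countA v1))) :=
        sum_pi_bool (fun i b => if b then σ.s2 i (s i) (countA v1) else 1 - σ.s2 i (s i) (countA v1))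
    _ = 1 := by simp

/-- The inner conditional winning probability given a signal vector. -/
def innerWin {n : ℕ} (σ : TwoRound n) (s : Fin n → Bool) : ℝ :=
  ∑ v1 : Fin n → Bool, pr1 σ s v1 *
    ∑ v2 : Fin n → Bool, pr2 σ s v1 v2 * (if 2 * countA v2 > n then (1:ℝ) else 0)

lemma prAwins_eq {n : ℕ} (σ : TwoRound n) (k : Bool) :
    prAwins phH phL σ k = ∑ s : Fin n → Bool, sigWeight phH phL k s * innerWin σ s := by
  unfold prAwins innerWin pr1 pr2
  simp only [Finset.mul_sum]
  refine Finset.sum_congr rfl fun s _ => Finset.sum_congr rfl fun v1 _ =>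
    Finset.sum_congr rfl fun v2 _ => ?_
  ring

lemma innerWin_nonneg {n : ℕ} (σ : TwoRound n) (s : Fin n → Bool) : 0 ≤ innerWin σ s := by
  refine Finset.sum_nonneg fun v1 _ => mul_nonneg (pr1_nonneg σ s v1) ?_
  refine Finset.sum_nonneg fun v2 _ => mul_nonneg (pr2_nonneg σ s v1 v2) ?_
  split <;> norm_num

lemma innerWin_le_one {n : ℕ} (σ : TwoRound n) (s : Fin n → Bool) : innerWin σ s ≤ 1 := by
  have h : innerWin σ s ≤ ∑ v1 : Fin n → Bool, pr1 σ s v1 := by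
    refine Finset.sum_le_sum fun v1 _ => ?_
    have h2 : ∑ v2 : Fin n → Bool, pr2 σ s v1 v2 * (if 2 * countA v2 > n then (1:ℝ) else 0) ≤ 1 := by
      calc ∑ v2 : Fin n → Bool, pr2 σ s v1 v2 * (if 2 * countA v2 > n then (1:ℝ) else 0)
          ≤ ∑ v2 : Fin n → Bool, pr2 σ s v1 v2 := by
            refine Finset.sum_le_sum fun v2 _ => ?_
            have := pr2_nonneg σ s v1 v2
            split <;> nlinarith
        _ = 1 := sum_pr2 σ s v1
    have h3 : 0 ≤ ∑ v2 : Fin n → Bool, pr2 σ s v1 v2 * (if 2 * countA v2 > n then (1:ℝ) else 0) := by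
      refine Finset.sum_nonneg fun v2 _ => mul_nonneg (pr2_nonneg σ s v1 v2) ?_
      split <;> norm_num
    have := pr1_nonneg σ s v1
    nlinarith
  rw [sum_pr1 σ s] at h
  exact h

lemma innerWin_eq_zero {n : ℕ} (σ : TwoRound n) (s : Fin n → Bool)
    (h : ∀ v1 v2, pr1 σ s v1 ≠ 0 → pr2 σ s v1 v2 ≠ 0 → ¬ (2 * countA v2 > n)) :
    innerWin σ s = 0 := by
  refine Finset.sum_eq_zero fun v1 _ => ?_
  rcases eq_or_ne (pr1 σ s v1) 0 with h1 | h1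
  · rw [h1, zero_mul]
  · rw [mul_eq_zero]; right
    refine Finset.sum_eq_zero fun v2 _ => ?_
    rcases eq_or_ne (pr2 σ s v1 v2) 0 with h2 | h2
    · rw [h2, zero_mul]
    · rw [if_neg (h v1 v2 h1 h2), mul_zero]

lemma innerWin_eq_one {n : ℕ} (σ : TwoRound n) (s : Fin n → Bool)
    (h : ∀ v1 v2, pr1 σ s v1 ≠ 0 → pr2 σ s v1 v2 ≠ 0 → 2 * countA v2 > n) :
    innerWin σ s = 1 := by
  rw [← sum_pr1 σ s]
  refine Finset.sum_congr rfl fun v1 _ => ?_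
  rcases eq_or_ne (pr1 σ s v1) 0 with h1 | h1
  · rw [h1, zero_mul]
  · rw [show ∑ v2 : Fin n → Bool, pr2 σ s v1 v2 * (if 2 * countA v2 > n then (1:ℝ) else 0)
        = ∑ v2 : Fin n → Bool, pr2 σ s v1 v2 from ?_, sum_pr2 σ s v1, mul_one]
    refine Finset.sum_congr rfl fun v2 _ => ?_
    rcases eq_or_ne (pr2 σ s v1 v2) 0 with h2 | h2
    · rw [h2, zero_mul]
    · rw [if_pos (h v1 v2 h1 h2), mul_one]

lemma prAwins_le_sum {n : ℕ} {k : Bool} (hp0 : 0 ≤ sigP phH phL k) (hp1 : sigP phH phL k ≤ 1)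
    (σ : TwoRound n) (Bad : Finset (Fin n → Bool))
    (h : ∀ s ∉ Bad, ∀ v1 v2, pr1 σ s v1 ≠ 0 → pr2 σ s v1 v2 ≠ 0 → ¬ (2 * countA v2 > n)) :
    prAwins phH phL σ k ≤ ∑ s ∈ Bad, sigWeight phH phL k s := by
  classical
  rw [prAwins_eq]
  have h1 : ∑ s : Fin n → Bool, sigWeight phH phL k s * innerWin σ s
      = ∑ s ∈ Bad, sigWeight phH phL k s * innerWin σ s := by
    refine (Finset.sum_subset (Finset.subset_univ Bad) fun s _ hs => ?_).symm
    rw [innerWin_eq_zero σ s (h s hs), mul_zero]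
  rw [h1]
  refine Finset.sum_le_sum fun s _ => ?_
  have hw := sigWeight_nonneg (n := n) hp0 hp1 s
  have := innerWin_le_one σ s
  have := innerWin_nonneg σ s
  nlinarith

lemma prAwins_ge_sum {n : ℕ} {k : Bool} (hp0 : 0 ≤ sigP phH phL k) (hp1 : sigP phH phL k ≤ 1)
    (σ : TwoRound n) (Good : Finset (Fin n → Bool))
    (h : ∀ s ∈ Good, ∀ v1 v2, pr1 σ s v1 ≠ 0 → pr2 σ s v1 v2 ≠ 0 → 2 * countA v2 > n) :
    ∑ s ∈ Good, sigWeight phH phL k s ≤ prAwins phH phL σ k := by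
  classical
  rw [prAwins_eq]
  have h1 : ∑ s ∈ Good, sigWeight phH phL k s = ∑ s ∈ Good, sigWeight phH phL k s * innerWin σ s := by
    refine Finset.sum_congr rfl fun s hs => ?_
    rw [innerWin_eq_one σ s (h s hs), mul_one]
  rw [h1]
  refine Finset.sum_le_sum_of_subset_of_nonneg (Finset.subset_univ Good) fun s _ _ => ?_
  exact mul_nonneg (sigWeight_nonneg hp0 hp1 s) (innerWin_nonneg σ s)

lemma prAwins_nonneg {n : ℕ} {k : Bool} (hp0 : 0 ≤ sigP phH phL k) (hp1 : sigP phH phL k ≤ 1)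
    (σ : TwoRound n) : 0 ≤ prAwins phH phL σ k := by
  rw [prAwins_eq]
  exact Finset.sum_nonneg fun s _ =>
    mul_nonneg (sigWeight_nonneg hp0 hp1 s) (innerWin_nonneg σ s)

lemma prAwins_le_one {n : ℕ} {k : Bool} (hp0 : 0 ≤ sigP phH phL k) (hp1 : sigP phH phL k ≤ 1)
    (σ : TwoRound n) : prAwins phH phL σ k ≤ 1 := by
  rw [prAwins_eq]
  calc ∑ s : Fin n → Bool, sigWeight phH phL k s * innerWin σ s
      ≤ ∑ s : Fin n → Bool, sigWeight phH phL k s := by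
        refine Finset.sum_le_sum fun s _ => ?_
        have hw := sigWeight_nonneg (n := n) hp0 hp1 s
        have := innerWin_le_one σ s
        have := innerWin_nonneg σ s
        nlinarith
    _ = 1 := sum_sigWeight n k

end Master

section Count

lemma card_filter_lt (n m : ℕ) (h : m ≤ n) :
    ((Finset.univ : Finset (Fin n)).filter fun i : Fin n => (i : ℕ) < m).card = m := by
  classical
  have key : ((Finset.univ : Finset (Fin n)).filter fun i : Fin n => (i : ℕ) < m).card
      = (Finset.range m).card := by
    apply Finset.card_bij (fun (i : Fin n) _ => (i : ℕ))
    · intro a ha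
      simp only [Finset.mem_filter, Finset.mem_univ, true_and] at ha
      simpa using ha
    · intro a _ b _ hab
      exact Fin.val_injective hab
    · intro b hb
      simp only [Finset.mem_range] at hb
      exact ⟨⟨b, lt_of_lt_of_le hb h⟩, by simp [hb], rfl⟩
  rw [key, Finset.card_range]

lemma card_filter_le (n m : ℕ) (h : m ≤ n) :
    ((Finset.univ : Finset (Fin n)).filter fun i : Fin n => m ≤ (i : ℕ)).card = n - m := by
  classical
  have h1 := Finset.card_filter_add_card_filter_not
    (s := (Finset.univ : Finset (Fin n))) (p := fun i : Fin n => (i : ℕ) < m)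
  rw [Finset.card_univ, Fintype.card_fin, card_filter_lt n m h] at h1
  have h2 : ((Finset.univ : Finset (Fin n)).filter fun i : Fin n => ¬ (i : ℕ) < m)
      = ((Finset.univ : Finset (Fin n)).filter fun i : Fin n => m ≤ (i : ℕ)) := by
    refine Finset.filter_congr fun i _ => ?_
    simp [not_lt]
  rw [h2] at h1
  omega

/-- Upper bound on the cardinality of the set of indices with value below `m`. -/
lemma card_filter_lt_le (n m : ℕ) :
    ((Finset.univ : Finset (Fin n)).filter fun i : Fin n => (i : ℕ) < m).card ≤ m := by
  classical
  have : ((Finset.univ : Finset (Fin n)).filter fun i : Fin n => (i : ℕ) < m).card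
      ≤ (Finset.range m).card := by
    apply Finset.card_le_card_of_injOn (fun i : Fin n => (i : ℕ))
    · intro a ha
      simp only [Finset.mem_coe, Finset.mem_filter, Finset.mem_univ, true_and] at ha
      simpa using ha
    · intro a _ b _ hab
      exact Fin.val_injective hab
  simpa using this

end Count

section Forced

variable {alphaF alphaU : ℝ}

lemma factor1_ne {n : ℕ} {σ' : TwoRound n} {s v1 : Fin n → Bool} (h : pr1 σ' s v1 ≠ 0)
    (i : Fin n) : (if v1 i then σ'.s1 i (s i) else 1 - σ'.s1 i (s i)) ≠ 0 :=
  Finset.prod_ne_zero_iff.mp h i (Finset.mem_univ i)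

lemma factor2_ne {n : ℕ} {σ' : TwoRound n} {s v1 v2 : Fin n → Bool} (h : pr2 σ' s v1 v2 ≠ 0)
    (i : Fin n) : (if v2 i then σ'.s2 i (s i) (countA v1) else 1 - σ'.s2 i (s i) (countA v1)) ≠ 0 :=
  Finset.prod_ne_zero_iff.mp h i (Finset.mem_univ i)

lemma v1_forced_F {n : ℕ} {Tv : Fin n → ℝ} {σ' : TwoRound n} {D : Finset (Fin n)}
    (hag : ∀ i ∉ D, σ'.s1 i = (thresholdProfile alphaF alphaU n Tv).s1 i)
    {s v1 : Fin n → Bool} (h : pr1 σ' s v1 ≠ 0) {i : Fin n} (hi : i ∉ D)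
    (hiF : (i : ℕ) < numF alphaF n) : v1 i = true := by
  have hf := factor1_ne h i
  rw [hag i hi] at hf
  simp only [thresholdProfile, hiF, if_true] at hf
  cases hv : v1 i
  · rw [hv] at hf; norm_num at hf
  · rfl

lemma v1_forced_U {n : ℕ} {Tv : Fin n → ℝ} {σ' : TwoRound n} {D : Finset (Fin n)}
    (hag : ∀ i ∉ D, σ'.s1 i = (thresholdProfile alphaF alphaU n Tv).s1 i)
    {s v1 : Fin n → Bool} (h : pr1 σ' s v1 ≠ 0) {i : Fin n} (hi : i ∉ D)
    (h1 : ¬ (i : ℕ) < numF alphaF n) (h2 : (i : ℕ) < numF alphaF n + numU alphaU n) :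
    v1 i = false := by
  have hf := factor1_ne h i
  rw [hag i hi] at hf
  simp only [thresholdProfile, h1, h2, if_true, if_false] at hf
  cases hv : v1 i
  · rfl
  · rw [hv] at hf; norm_num at hf

lemma v1_forced_C {n : ℕ} {Tv : Fin n → ℝ} {σ' : TwoRound n} {D : Finset (Fin n)}
    (hag : ∀ i ∉ D, σ'.s1 i = (thresholdProfile alphaF alphaU n Tv).s1 i)
    {s v1 : Fin n → Bool} (h : pr1 σ' s v1 ≠ 0) {i : Fin n} (hi : i ∉ D)
    (h2 : ¬ (i : ℕ) < numF alphaF n + numU alphaU n) : v1 i = s i := by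
  have h1 : ¬ (i : ℕ) < numF alphaF n := fun hc => h2 (by omega)
  have hf := factor1_ne h i
  rw [hag i hi] at hf
  simp only [thresholdProfile, h1, h2, if_false] at hf
  cases hv : v1 i <;> rw [hv] at hf <;> cases hs : s i <;> rw [hs] at hf <;> simp_all

lemma v2_forced_F {n : ℕ} {Tv : Fin n → ℝ} {σ' : TwoRound n} {D : Finset (Fin n)}
    (hag : ∀ i ∉ D, σ'.s2 i = (thresholdProfile alphaF alphaU n Tv).s2 i)
    {s v1 v2 : Fin n → Bool} (h : pr2 σ' s v1 v2 ≠ 0) {i : Fin n} (hi : i ∉ D)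
    (hiF : (i : ℕ) < numF alphaF n) : v2 i = true := by
  have hf := factor2_ne h i
  rw [hag i hi] at hf
  simp only [thresholdProfile, hiF, if_true] at hf
  cases hv : v2 i
  · rw [hv] at hf; norm_num at hf
  · rfl

lemma v2_forced_U {n : ℕ} {Tv : Fin n → ℝ} {σ' : TwoRound n} {D : Finset (Fin n)}
    (hag : ∀ i ∉ D, σ'.s2 i = (thresholdProfile alphaF alphaU n Tv).s2 i)
    {s v1 v2 : Fin n → Bool} (h : pr2 σ' s v1 v2 ≠ 0) {i : Fin n} (hi : i ∉ D)
    (h1 : ¬ (i : ℕ) < numF alphaF n) (h2 : (i : ℕ) < numF alphaF n + numU alphaU n) :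
    v2 i = false := by
  have hf := factor2_ne h i
  rw [hag i hi] at hf
  simp only [thresholdProfile, h1, h2, if_true, if_false] at hf
  cases hv : v2 i
  · rfl
  · rw [hv] at hf; norm_num at hf

lemma v2_forced_C_lt {n : ℕ} {Tv : Fin n → ℝ} {σ' : TwoRound n} {D : Finset (Fin n)}
    (hag : ∀ i ∉ D, σ'.s2 i = (thresholdProfile alphaF alphaU n Tv).s2 i)
    {s v1 v2 : Fin n → Bool} (h : pr2 σ' s v1 v2 ≠ 0) {i : Fin n} (hi : i ∉ D)
    (h2 : ¬ (i : ℕ) < numF alphaF n + numU alphaU n)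
    (hx : ¬ Tv i ≤ (countA v1 : ℝ)) : v2 i = false := by
  have h1 : ¬ (i : ℕ) < numF alphaF n := fun hc => h2 (by omega)
  have hf := factor2_ne h i
  rw [hag i hi] at hf
  simp only [thresholdProfile, h1, h2, hx, if_false] at hf
  cases hv : v2 i
  · rfl
  · rw [hv] at hf; norm_num at hf

lemma v2_forced_C_ge {n : ℕ} {Tv : Fin n → ℝ} {σ' : TwoRound n} {D : Finset (Fin n)}
    (hag : ∀ i ∉ D, σ'.s2 i = (thresholdProfile alphaF alphaU n Tv).s2 i)
    {s v1 v2 : Fin n → Bool} (h : pr2 σ' s v1 v2 ≠ 0) {i : Fin n} (hi : i ∉ D)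
    (h2 : ¬ (i : ℕ) < numF alphaF n + numU alphaU n)
    (hx : Tv i ≤ (countA v1 : ℝ)) : v2 i = true := by
  have h1 : ¬ (i : ℕ) < numF alphaF n := fun hc => h2 (by omega)
  have hf := factor2_ne h i
  rw [hag i hi] at hf
  simp only [thresholdProfile, h1, h2, hx, if_true, if_false] at hf
  cases hv : v2 i
  · rw [hv] at hf; norm_num at hf
  · rfl

end Forced

section MainEst

variable {phH phL alphaF alphaU : ℝ}

lemma sigP_false : sigP phH phL false = phL := rfl
lemma sigP_true : sigP phH phL true = phH := rfl

lemma num_bounds {n : ℕ} (hn : 1 ≤ n) (hF0 : 0 ≤ alphaF) (hF : alphaF < 1/2)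
    (hU0 : 0 ≤ alphaU) (hU : alphaU < 1/2) (hC : alphaF + alphaU < 1) :
    2 * numF alphaF n < n ∧ 2 * numU alphaU n < n ∧ numF alphaF n + numU alphaU n ≤ n := by
  have hn1 : (1:ℝ) ≤ (n:ℝ) := by exact_mod_cast hn
  have hNF : (numF alphaF n : ℝ) ≤ alphaF * n := Nat.floor_le (by positivity)
  have hNU : (numU alphaU n : ℝ) ≤ alphaU * n := Nat.floor_le (by positivity)
  refine ⟨?_, ?_, ?_⟩
  · have : (2 * numF alphaF n : ℝ) < n := by push_cast; nlinarith
    exact_mod_cast this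
  · have : (2 * numU alphaU n : ℝ) < n := by push_cast; nlinarith
    exact_mod_cast this
  · have : (numF alphaF n + numU alphaU n : ℝ) < n := by push_cast; nlinarith
    have h2 : (numF alphaF n + numU alphaU n : ℕ) < n := by exact_mod_cast this
    omega

/-- Key estimate in state `L`: if all deviators are friendly, `A` wins with
probability at most `1/(4δ²n)`. -/
lemma estimate_L {n : ℕ} (hn : 1 ≤ n)
    (hp0 : 0 < phL) (hpLH : phL < phH) (hp1 : phH < 1)
    (hF0 : 0 ≤ alphaF) (hF : alphaF < 1/2)
    (hU0 : 0 ≤ alphaU) (hU : alphaU < 1/2) (hC : alphaF + alphaU < 1)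
    {δ : ℝ} (hδ : 0 < δ) {Tv : Fin n → ℝ}
    (hsep : ∀ i : Fin n, numF alphaF n + numU alphaU n ≤ (i : ℕ) →
      (numF alphaF n : ℝ) + (numC alphaF alphaU n : ℝ) * phL + δ * n ≤ Tv i)
    (σ' : TwoRound n) (D : Finset (Fin n)) (hD : ∀ i ∈ D, (i : ℕ) < numF alphaF n)
    (hag : ∀ i ∉ D, σ'.s1 i = (thresholdProfile alphaF alphaU n Tv).s1 i ∧
      σ'.s2 i = (thresholdProfile alphaF alphaU n Tv).s2 i) :
    prAwins phH phL σ' false ≤ 1 / (4 * δ ^ 2 * n) := by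
  classical
  obtain ⟨h2NF, h2NU, hFUn⟩ := num_bounds hn hF0 hF hU0 hU hC
  set NF := numF alphaF n with hNFdef
  set NU := numU alphaU n with hNUdef
  set NC := numC alphaF alphaU n with hNCdef
  have hsig := sigP_mem (phH := phH) (phL := phL) (k := false) (le_of_lt hp0)
    (le_of_lt hpLH) (le_of_lt hp1)
  set C : Finset (Fin n) := Finset.univ.filter fun i : Fin n => NF + NU ≤ (i : ℕ) with hCdef
  have cardC : C.card = NC := by
    rw [hCdef, card_filter_le n (NF + NU) hFUn, hNCdef]
    unfold numC
    omega
  set Bad : Finset (Fin n → Bool) := Finset.univ.filter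
    (fun s : Fin n → Bool => (NC : ℝ) * phL + δ * n ≤ ((C.filter fun i => s i).card : ℝ))
    with hBdef
  have hag1 : ∀ i ∉ D, σ'.s1 i = (thresholdProfile alphaF alphaU n Tv).s1 i :=
    fun i hi => (hag i hi).1
  have hag2 : ∀ i ∉ D, σ'.s2 i = (thresholdProfile alphaF alphaU n Tv).s2 i :=
    fun i hi => (hag i hi).2
  have step1 : prAwins phH phL σ' false ≤ ∑ s ∈ Bad, sigWeight phH phL false s := by
    refine prAwins_le_sum hsig.1 hsig.2 σ' Bad ?_
    intro s hs v1 v2 hp1' hp2'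
    rw [hBdef, Finset.mem_filter] at hs
    push_neg at hs
    have hXs : ((C.filter fun i => s i).card : ℝ) < (NC : ℝ) * phL + δ * n :=
      hs (Finset.mem_univ s)
    -- first-round count bound
    have hsub1 : Finset.univ.filter (fun i : Fin n => v1 i = true)
        ⊆ (Finset.univ.filter fun i : Fin n => (i : ℕ) < NF) ∪ (C.filter fun i => s i) := by
      intro i hi
      rw [Finset.mem_filter] at hi
      by_cases hiD : i ∈ D
      · exact Finset.mem_union_left _ (Finset.mem_filter.mpr ⟨Finset.mem_univ i, hD i hiD⟩)
      · by_cases hc1 : (i : ℕ) < NF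
        · exact Finset.mem_union_left _ (Finset.mem_filter.mpr ⟨Finset.mem_univ i, hc1⟩)
        · by_cases hc2 : (i : ℕ) < NF + NU
          · exact absurd (v1_forced_U hag1 hp1' hiD hc1 hc2) (by simp [hi.2])
          · refine Finset.mem_union_right _ (Finset.mem_filter.mpr ⟨?_, ?_⟩)
            · rw [hCdef, Finset.mem_filter]
              exact ⟨Finset.mem_univ i, not_lt.mp hc2⟩
            · rw [← v1_forced_C hag1 hp1' hiD hc2]
              exact hi.2
    have hx : countA v1 ≤ NF + (C.filter fun i => s i).card := by
      unfold countA
      calc (Finset.univ.filter fun i : Fin n => v1 i = true).card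
          ≤ ((Finset.univ.filter fun i : Fin n => (i : ℕ) < NF) ∪ (C.filter fun i => s i)).card :=
            Finset.card_le_card hsub1
        _ ≤ (Finset.univ.filter fun i : Fin n => (i : ℕ) < NF).card + (C.filter fun i => s i).card :=
            Finset.card_union_le _ _
        _ ≤ NF + (C.filter fun i => s i).card := by
            have := card_filter_lt_le n NF
            omega
    -- second-round: only friendly agents can vote A
    have hsub2 : Finset.univ.filter (fun i : Fin n => v2 i = true)
        ⊆ Finset.univ.filter fun i : Fin n => (i : ℕ) < NF := by
      intro i hi
      rw [Finset.mem_filter] at hi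
      by_cases hiD : i ∈ D
      · exact Finset.mem_filter.mpr ⟨Finset.mem_univ i, hD i hiD⟩
      · by_cases hc1 : (i : ℕ) < NF
        · exact Finset.mem_filter.mpr ⟨Finset.mem_univ i, hc1⟩
        · by_cases hc2 : (i : ℕ) < NF + NU
          · exact absurd (v2_forced_U hag2 hp2' hiD hc1 hc2) (by simp [hi.2])
          · have hTi : ¬ Tv i ≤ (countA v1 : ℝ) := by
              push_neg
              have hsepi := hsep i (not_lt.mp hc2)
              have hcast : (countA v1 : ℝ) ≤ (NF : ℝ) + ((C.filter fun i => s i).card : ℝ) := by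
                exact_mod_cast hx
              linarith
            exact absurd (v2_forced_C_lt hag2 hp2' hiD hc2 hTi) (by simp [hi.2])
    have hcount2 : countA v2 ≤ NF := by
      unfold countA
      calc (Finset.univ.filter fun i : Fin n => v2 i = true).card
          ≤ (Finset.univ.filter fun i : Fin n => (i : ℕ) < NF).card := Finset.card_le_card hsub2
        _ ≤ NF := card_filter_lt_le n NF
    omega
  have step2 : ∑ s ∈ Bad, sigWeight phH phL false s
      ≤ (C.card : ℝ) * (sigP phH phL false * (1 - sigP phH phL false)) / (δ * n) ^ 2 := by
    refine cheb_bound hsig.1 hsig.2 C (by positivity) Bad ?_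
    intro s hs
    rw [hBdef, Finset.mem_filter] at hs
    have hXs := hs.2
    rw [sigP_false, cardC]
    have h1 : δ * n ≤ ((C.filter fun i => s i).card : ℝ) - phL * (NC : ℝ) := by
      have : phL * (NC : ℝ) = (NC : ℝ) * phL := by ring
      linarith [this ▸ hXs]
    exact le_trans h1 (le_abs_self _)
  have step3 : (C.card : ℝ) * (sigP phH phL false * (1 - sigP phH phL false)) / (δ * n) ^ 2
      ≤ 1 / (4 * δ ^ 2 * n) := by
    rw [sigP_false, cardC]
    have hn1 : (1:ℝ) ≤ (n:ℝ) := by exact_mod_cast hn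
    have hNCn : (NC : ℝ) ≤ (n : ℝ) := by
      have : NC ≤ n := by rw [hNCdef]; unfold numC; omega
      exact_mod_cast this
    have h14 : phL * (1 - phL) ≤ 1/4 := by nlinarith [sq_nonneg (phL - 1/2)]
    have hden : (0:ℝ) < (δ * n) ^ 2 := by positivity
    calc (NC : ℝ) * (phL * (1 - phL)) / (δ * n) ^ 2
        ≤ ((n : ℝ) * (1/4)) / (δ * n) ^ 2 := by
          have hNC0 : (0:ℝ) ≤ (NC : ℝ) := Nat.cast_nonneg _
          have hnum : (NC : ℝ) * (phL * (1 - phL)) ≤ (n : ℝ) * (1/4) := by nlinarith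
          rw [div_le_div_iff₀ hden hden]
          nlinarith
      _ = 1 / (4 * δ ^ 2 * n) := by
          field_simp
  linarith
end MainEst

section MainEstH

variable {phH phL alphaF alphaU : ℝ}

/-- Key estimate in state `H`: if all deviators are unfriendly, `A` wins with
probability at least `1 - 1/(4δ²n)`. -/
lemma estimate_H {n : ℕ} (hn : 1 ≤ n)
    (hp0 : 0 < phL) (hpLH : phL < phH) (hp1 : phH < 1)
    (hF0 : 0 ≤ alphaF) (hF : alphaF < 1/2)
    (hU0 : 0 ≤ alphaU) (hU : alphaU < 1/2) (hC : alphaF + alphaU < 1)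
    {δ : ℝ} (hδ : 0 < δ) {Tv : Fin n → ℝ}
    (hsep : ∀ i : Fin n, numF alphaF n + numU alphaU n ≤ (i : ℕ) →
      Tv i ≤ (numF alphaF n : ℝ) + (numC alphaF alphaU n : ℝ) * phH - δ * n)
    (σ' : TwoRound n) (D : Finset (Fin n))
    (hD : ∀ i ∈ D, numF alphaF n ≤ (i : ℕ) ∧ (i : ℕ) < numF alphaF n + numU alphaU n)
    (hag : ∀ i ∉ D, σ'.s1 i = (thresholdProfile alphaF alphaU n Tv).s1 i ∧
      σ'.s2 i = (thresholdProfile alphaF alphaU n Tv).s2 i) :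
    1 - 1 / (4 * δ ^ 2 * n) ≤ prAwins phH phL σ' true := by
  classical
  obtain ⟨h2NF, h2NU, hFUn⟩ := num_bounds hn hF0 hF hU0 hU hC
  set NF := numF alphaF n with hNFdef
  set NU := numU alphaU n with hNUdef
  set NC := numC alphaF alphaU n with hNCdef
  have hsig := sigP_mem (phH := phH) (phL := phL) (k := true) (le_of_lt hp0)
    (le_of_lt hpLH) (le_of_lt hp1)
  set C : Finset (Fin n) := Finset.univ.filter fun i : Fin n => NF + NU ≤ (i : ℕ) with hCdef
  have cardC : C.card = NC := by
    rw [hCdef, card_filter_le n (NF + NU) hFUn, hNCdef]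
    unfold numC
    omega
  have hNFn : NF ≤ n := by omega
  have cardF : (Finset.univ.filter fun i : Fin n => (i : ℕ) < NF).card = NF :=
    card_filter_lt n NF hNFn
  set Good : Finset (Fin n → Bool) := Finset.univ.filter
    (fun s : Fin n → Bool => (NC : ℝ) * phH - δ * n ≤ ((C.filter fun i => s i).card : ℝ))
    with hGdef
  have hag1 : ∀ i ∉ D, σ'.s1 i = (thresholdProfile alphaF alphaU n Tv).s1 i :=
    fun i hi => (hag i hi).1
  have hag2 : ∀ i ∉ D, σ'.s2 i = (thresholdProfile alphaF alphaU n Tv).s2 i :=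
    fun i hi => (hag i hi).2
  have step1 : ∑ s ∈ Good, sigWeight phH phL true s ≤ prAwins phH phL σ' true := by
    refine prAwins_ge_sum hsig.1 hsig.2 σ' Good ?_
    intro s hs v1 v2 hp1' hp2'
    rw [hGdef, Finset.mem_filter] at hs
    have hXs : (NC : ℝ) * phH - δ * n ≤ ((C.filter fun i => s i).card : ℝ) := hs.2
    -- members of D are unfriendly
    have hDnotF : ∀ i : Fin n, (i : ℕ) < NF → i ∉ D := by
      intro i hiF hiD
      exact absurd (hD i hiD).1 (by omega)
    have hDnotC : ∀ i : Fin n, NF + NU ≤ (i : ℕ) → i ∉ D := by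
      intro i hiC hiD
      exact absurd (hD i hiD).2 (by omega)
    -- first-round votes include all friendly and all `h`-signal contingent agents
    have hsub1 : (Finset.univ.filter fun i : Fin n => (i : ℕ) < NF) ∪ (C.filter fun i => s i)
        ⊆ Finset.univ.filter (fun i : Fin n => v1 i = true) := by
      intro i hi
      rcases Finset.mem_union.mp hi with hi1 | hi2
      · rw [Finset.mem_filter] at hi1
        refine Finset.mem_filter.mpr ⟨Finset.mem_univ i, ?_⟩
        exact v1_forced_F hag1 hp1' (hDnotF i hi1.2) hi1.2
      · rw [Finset.mem_filter, hCdef, Finset.mem_filter] at hi2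
        obtain ⟨⟨_, hiC⟩, hsi⟩ := hi2
        refine Finset.mem_filter.mpr ⟨Finset.mem_univ i, ?_⟩
        rw [v1_forced_C hag1 hp1' (hDnotC i hiC) (by omega)]
        exact hsi
    have hdisj : Disjoint (Finset.univ.filter fun i : Fin n => (i : ℕ) < NF)
        (C.filter fun i => s i) := by
      rw [Finset.disjoint_left]
      intro i hi1 hi2
      rw [Finset.mem_filter] at hi1
      rw [Finset.mem_filter, hCdef, Finset.mem_filter] at hi2
      omega
    have hx : NF + (C.filter fun i => s i).card ≤ countA v1 := by
      unfold countA
      calc NF + (C.filter fun i => s i).card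
          = ((Finset.univ.filter fun i : Fin n => (i : ℕ) < NF) ∪ (C.filter fun i => s i)).card := by
            rw [Finset.card_union_of_disjoint hdisj, cardF]
        _ ≤ (Finset.univ.filter fun i : Fin n => v1 i = true).card := Finset.card_le_card hsub1
    -- threshold is met
    have hthr : ∀ i : Fin n, NF + NU ≤ (i : ℕ) → Tv i ≤ (countA v1 : ℝ) := by
      intro i hiC
      have h1 := hsep i hiC
      have h2 : (NF : ℝ) + ((C.filter fun i => s i).card : ℝ) ≤ (countA v1 : ℝ) := by
        exact_mod_cast hx
      linarith
    -- second round: all friendly and contingent agents vote A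
    have hsub2 : (Finset.univ.filter fun i : Fin n => (i : ℕ) < NF) ∪ C
        ⊆ Finset.univ.filter (fun i : Fin n => v2 i = true) := by
      intro i hi
      rcases Finset.mem_union.mp hi with hi1 | hi2
      · rw [Finset.mem_filter] at hi1
        exact Finset.mem_filter.mpr ⟨Finset.mem_univ i,
          v2_forced_F hag2 hp2' (hDnotF i hi1.2) hi1.2⟩
      · rw [hCdef, Finset.mem_filter] at hi2
        refine Finset.mem_filter.mpr ⟨Finset.mem_univ i, ?_⟩
        exact v2_forced_C_ge hag2 hp2' (hDnotC i hi2.2) (by omega) (hthr i hi2.2)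
    have hdisj2 : Disjoint (Finset.univ.filter fun i : Fin n => (i : ℕ) < NF) C := by
      rw [Finset.disjoint_left]
      intro i hi1 hi2
      rw [Finset.mem_filter] at hi1
      rw [hCdef, Finset.mem_filter] at hi2
      omega
    have hcount2 : NF + NC ≤ countA v2 := by
      unfold countA
      calc NF + NC
          = ((Finset.univ.filter fun i : Fin n => (i : ℕ) < NF) ∪ C).card := by
            rw [Finset.card_union_of_disjoint hdisj2, cardF, cardC]
        _ ≤ (Finset.univ.filter fun i : Fin n => v2 i = true).card := Finset.card_le_card hsub2
    have hNCeq : NC = n - NF - NU := by rw [hNCdef]; rfl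
    omega
  have step2 : 1 - 1 / (4 * δ ^ 2 * n) ≤ ∑ s ∈ Good, sigWeight phH phL true s := by
    have hsplit : ∑ s ∈ Good, sigWeight phH phL true s
        + ∑ s ∈ Finset.univ.filter (fun s : Fin n → Bool =>
            ¬ ((NC : ℝ) * phH - δ * n ≤ ((C.filter fun i => s i).card : ℝ))), sigWeight phH phL true s
        = 1 := by
      rw [hGdef, Finset.sum_filter_add_sum_filter_not]
      exact sum_sigWeight n true
    have htail : ∑ s ∈ Finset.univ.filter (fun s : Fin n → Bool =>
        ¬ ((NC : ℝ) * phH - δ * n ≤ ((C.filter fun i => s i).card : ℝ))), sigWeight phH phL true s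
        ≤ 1 / (4 * δ ^ 2 * n) := by
      have hch : ∑ s ∈ Finset.univ.filter (fun s : Fin n → Bool =>
          ¬ ((NC : ℝ) * phH - δ * n ≤ ((C.filter fun i => s i).card : ℝ))), sigWeight phH phL true s
          ≤ (C.card : ℝ) * (sigP phH phL true * (1 - sigP phH phL true)) / (δ * n) ^ 2 := by
        refine cheb_bound hsig.1 hsig.2 C (by positivity) _ ?_
        intro s hs
        rw [Finset.mem_filter] at hs
        have hXs := hs.2
        push_neg at hXs
        rw [sigP_true, cardC]
        have h1 : δ * n ≤ -(((C.filter fun i => s i).card : ℝ) - phH * (NC : ℝ)) := by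
          nlinarith
        exact le_trans h1 (neg_le_abs _)
      have hbd : (C.card : ℝ) * (sigP phH phL true * (1 - sigP phH phL true)) / (δ * n) ^ 2
          ≤ 1 / (4 * δ ^ 2 * n) := by
        rw [sigP_true, cardC]
        have hn1 : (1:ℝ) ≤ (n:ℝ) := by exact_mod_cast hn
        have hNCn : (NC : ℝ) ≤ (n : ℝ) := by
          have : NC ≤ n := by rw [hNCdef]; unfold numC; omega
          exact_mod_cast this
        have h14 : phH * (1 - phH) ≤ 1/4 := by nlinarith [sq_nonneg (phH - 1/2)]
        have hden : (0:ℝ) < (δ * n) ^ 2 := by positivity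
        have hNC0 : (0:ℝ) ≤ (NC : ℝ) := Nat.cast_nonneg _
        have hnum : (NC : ℝ) * (phH * (1 - phH)) ≤ (n : ℝ) * (1/4) := by nlinarith
        calc (NC : ℝ) * (phH * (1 - phH)) / (δ * n) ^ 2
            ≤ ((n : ℝ) * (1/4)) / (δ * n) ^ 2 := by
              rw [div_le_div_iff₀ hden hden]
              nlinarith
          _ = 1 / (4 * δ ^ 2 * n) := by
              field_simp
      linarith
    linarith
  linarith

end MainEstH

set_option maxHeartbeats 1000000 in
/-- **Theorem 3 ("Informative + threshold" equilibrium).** In any voting environment with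
0-1 utilities, every constantly separable sequence of informative+threshold profiles has
fidelity converging to `1` and consists of `ε n`-strong Bayes Nash equilibria for some
nonnegative `ε n → 0`. -/
theorem informative_threshold_equilibrium
    (PH PL phH phL alphaF alphaU : ℝ)
    (hPH : 0 < PH) (hPL : 0 < PL) (hPsum : PH + PL = 1)
    (hphL0 : 0 < phL) (hph : phL < phH) (hphH1 : phH < 1)
    (halphaF0 : 0 ≤ alphaF) (halphaF : alphaF < 1 / 2)
    (halphaU0 : 0 ≤ alphaU) (halphaU : alphaU < 1 / 2)
    (halphaC : alphaF + alphaU < 1)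
    (T : ∀ n : ℕ, Fin n → ℝ)
    (hT : ConstantlySeparable phH phL alphaF alphaU T) :
    Tendsto (fun n => fidelity PH PL phH phL (thresholdProfile alphaF alphaU n (T n)))
      atTop (nhds 1) ∧
    ∃ ε : ℕ → ℝ, (∀ n, 0 ≤ ε n) ∧ Tendsto ε atTop (nhds 0) ∧
      ∀ n, IsEpsStrongBNE PH PL phH phL alphaF alphaU
        (thresholdProfile alphaF alphaU n (T n)) (ε n) := by
  classical
  obtain ⟨n₀, δ, hδ, hsep⟩ := hT
  have hsigL := sigP_mem (phH := phH) (phL := phL) (k := false) (le_of_lt hphL0)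
    (le_of_lt hph) (le_of_lt hphH1)
  have hsigH := sigP_mem (phH := phH) (phL := phL) (k := true) (le_of_lt hphL0)
    (le_of_lt hph) (le_of_lt hphH1)
  set N : ℕ := max n₀ 1 with hNdef
  set B : ℕ → ℝ := fun n => 1 / (4 * δ ^ 2 * n) with hBdef
  have hB0 : ∀ n, 0 ≤ B n := fun n => by rw [hBdef]; positivity
  have hBto : Tendsto B atTop (nhds 0) := by
    have heq : B = fun n : ℕ => (1 / (4 * δ ^ 2)) / (n : ℝ) := by
      funext n
      rw [hBdef, div_div]
    rw [heq]
    exact tendsto_const_div_atTop_nhds_zero_nat _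
  -- probability bounds for arbitrary profiles
  have hprL : ∀ {n : ℕ} (σ : TwoRound n),
      0 ≤ prAwins phH phL σ false ∧ prAwins phH phL σ false ≤ 1 :=
    fun σ => ⟨prAwins_nonneg hsigL.1 hsigL.2 σ, prAwins_le_one hsigL.1 hsigL.2 σ⟩
  have hprH : ∀ {n : ℕ} (σ : TwoRound n),
      0 ≤ prAwins phH phL σ true ∧ prAwins phH phL σ true ≤ 1 :=
    fun σ => ⟨prAwins_nonneg hsigH.1 hsigH.2 σ, prAwins_le_one hsigH.1 hsigH.2 σ⟩
  have hutil : ∀ {n : ℕ} (σ : TwoRound n) (j : Fin n),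
      0 ≤ util PH PL phH phL alphaF alphaU σ j ∧ util PH PL phH phL alphaF alphaU σ j ≤ 1 := by
    intro n σ j
    obtain ⟨hL0, hL1⟩ := hprL σ
    obtain ⟨hH0, hH1⟩ := hprH σ
    unfold util fidelity
    split_ifs <;> constructor <;> nlinarith
  -- the two key estimates for the profile itself
  have hkeyL : ∀ n, N ≤ n →
      prAwins phH phL (thresholdProfile alphaF alphaU n (T n)) false ≤ B n := by
    intro n hn
    refine estimate_L (le_trans (le_max_right n₀ 1) hn) hphL0 hph hphH1 halphaF0 halphaF
      halphaU0 halphaU halphaC hδ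
      (fun i hi => (hsep n (le_trans (le_max_left n₀ 1) hn) i hi).1)
      (thresholdProfile alphaF alphaU n (T n)) ∅ (fun i hi => absurd hi (Finset.notMem_empty i))
      (fun i _ => ⟨rfl, rfl⟩)
  have hkeyH : ∀ n, N ≤ n →
      1 - B n ≤ prAwins phH phL (thresholdProfile alphaF alphaU n (T n)) true := by
    intro n hn
    refine estimate_H (le_trans (le_max_right n₀ 1) hn) hphL0 hph hphH1 halphaF0 halphaF
      halphaU0 halphaU halphaC hδ
      (fun i hi => (hsep n (le_trans (le_max_left n₀ 1) hn) i hi).2)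
      (thresholdProfile alphaF alphaU n (T n)) ∅ (fun i hi => absurd hi (Finset.notMem_empty i))
      (fun i _ => ⟨rfl, rfl⟩)
  have hfid_ge : ∀ n, N ≤ n →
      1 - B n ≤ fidelity PH PL phH phL (thresholdProfile alphaF alphaU n (T n)) := by
    intro n hn
    have h1 := hkeyL n hn
    have h2 := hkeyH n hn
    obtain ⟨hL0, hL1⟩ := hprL (thresholdProfile alphaF alphaU n (T n))
    obtain ⟨hH0, hH1⟩ := hprH (thresholdProfile alphaF alphaU n (T n))
    unfold fidelity
    nlinarith
  have hfid_le : ∀ n : ℕ,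
      fidelity PH PL phH phL (thresholdProfile alphaF alphaU n (T n)) ≤ 1 := by
    intro n
    obtain ⟨hL0, hL1⟩ := hprL (thresholdProfile alphaF alphaU n (T n))
    obtain ⟨hH0, hH1⟩ := hprH (thresholdProfile alphaF alphaU n (T n))
    unfold fidelity
    nlinarith
  constructor
  · -- Part 1: fidelity → 1
    have hlow : Tendsto (fun n => 1 - B n) atTop (nhds 1) := by
      have := hBto.const_sub 1
      simpa using this
    refine tendsto_of_tendsto_of_tendsto_of_le_of_le' hlow tendsto_const_nhds ?_ ?_
    · exact (eventually_ge_atTop N).mono fun n hn => hfid_ge n hn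
    · exact Eventually.of_forall fun n => hfid_le n
  · -- Part 2: ε-strong BNE
    refine ⟨fun n => if N ≤ n then 6 * B n else 1, fun n => ?_, ?_, ?_⟩
    · show (0:ℝ) ≤ if N ≤ n then 6 * B n else 1
      split_ifs
      · have := hB0 n; linarith
      · norm_num
    · have hcong : (fun n => if N ≤ n then 6 * B n else 1) =ᶠ[atTop] fun n => 6 * B n :=
        (eventually_ge_atTop N).mono fun n hn => if_pos hn
      have h6 : Tendsto (fun n => 6 * B n) atTop (nhds 0) := by
        have h := hBto.const_mul (6:ℝ)
        rw [mul_zero] at h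
        exact h
      exact h6.congr' hcong.symm
    · intro n
      rintro ⟨D, σ', hagree, hweak, i, hiD, hgain⟩
      set Sn := thresholdProfile alphaF alphaU n (T n) with hSn
      replace hgain : util PH PL phH phL alphaF alphaU Sn i + (if N ≤ n then 6 * B n else 1)
          < util PH PL phH phL alphaF alphaU σ' i := hgain
      by_cases hNn : N ≤ n
      case neg =>
        rw [if_neg hNn] at hgain
        have h1 := (hutil Sn i).1
        have h2 := (hutil σ' i).2
        linarith
      case pos =>
      rw [if_pos hNn] at hgain
      have hn1 : 1 ≤ n := le_trans (le_max_right n₀ 1) hNn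
      have hn0 : n₀ ≤ n := le_trans (le_max_left n₀ 1) hNn
      have hBn := hB0 n
      set aL := prAwins phH phL Sn false with haLdef
      set aH := prAwins phH phL Sn true with haHdef
      set aL' := prAwins phH phL σ' false with haL'def
      set aH' := prAwins phH phL σ' true with haH'def
      obtain ⟨haL0, haL1⟩ := hprL Sn
      obtain ⟨haH0, haH1⟩ := hprH Sn
      obtain ⟨haL'0, haL'1⟩ := hprL σ'
      obtain ⟨haH'0, haH'1⟩ := hprH σ'
      have haL : aL ≤ B n := hkeyL n hNn
      have haH : 1 - B n ≤ aH := hkeyH n hNn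
      have efid : fidelity PH PL phH phL Sn = PL * (1 - aL) + PH * aH := rfl
      have efid' : fidelity PH PL phH phL σ' = PL * (1 - aL') + PH * aH' := rfl
      have hfidB : 1 - fidelity PH PL phH phL Sn ≤ B n := by
        rw [efid]; nlinarith
      set NF := numF alphaF n with hNF
      set NU := numU alphaU n with hNU
      -- utilities of the three classes
      have eutil : ∀ (σ : TwoRound n) (j : Fin n),
          util PH PL phH phL alphaF alphaU σ j
            = if (j : ℕ) < NF then PH * prAwins phH phL σ true + PL * prAwins phH phL σ false
              else if (j : ℕ) < NF + NU then
                PH * (1 - prAwins phH phL σ true) + PL * (1 - prAwins phH phL σ false)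
              else fidelity PH PL phH phL σ := fun σ j => rfl
      by_cases hiF : (i : ℕ) < NF
      · -- the strict gainer is friendly
        have hgain' : PH * aH + PL * aL + 6 * B n < PH * aH' + PL * aL' := by
          rw [eutil Sn i, eutil σ' i, if_pos hiF, if_pos hiF] at hgain
          linarith
        by_cases hDu : ∃ j ∈ D, ¬ (j : ℕ) < NF ∧ (j : ℕ) < NF + NU
        · obtain ⟨j, hjD, hj1, hj2⟩ := hDu
          have hw := hweak j hjD
          rw [eutil Sn j, eutil σ' j, if_neg hj1, if_neg hj1, if_pos hj2, if_pos hj2] at hw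
          linarith
        · by_cases hDc : ∃ j ∈ D, ¬ (j : ℕ) < NF + NU
          · obtain ⟨j, hjD, hj1⟩ := hDc
            have hj0 : ¬ (j : ℕ) < NF := fun hc => hj1 (by omega)
            have hw := hweak j hjD
            rw [eutil Sn j, eutil σ' j, if_neg hj0, if_neg hj0, if_neg hj1, if_neg hj1] at hw
            rw [efid, efid'] at hw
            nlinarith
          · have hDF : ∀ j ∈ D, (j : ℕ) < NF := by
              intro j hj
              by_contra hc
              rcases lt_or_ge (j : ℕ) (NF + NU) with h | h
              · exact hDu ⟨j, hj, hc, h⟩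
              · exact hDc ⟨j, hj, by omega⟩
            have haL' : aL' ≤ B n :=
              estimate_L hn1 hphL0 hph hphH1 halphaF0 halphaF halphaU0 halphaU halphaC hδ
                (fun k hk => (hsep n hn0 k hk).1) σ' D hDF hagree
            have hPL1 : PL ≤ 1 := by linarith
            nlinarith
      · by_cases hiU : (i : ℕ) < NF + NU
        · -- the strict gainer is unfriendly
          have hgain' : PH * (1 - aH) + PL * (1 - aL) + 6 * B n
              < PH * (1 - aH') + PL * (1 - aL') := by
            rw [eutil Sn i, eutil σ' i, if_neg hiF, if_neg hiF, if_pos hiU, if_pos hiU] at hgain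
            linarith
          by_cases hDf : ∃ j ∈ D, (j : ℕ) < NF
          · obtain ⟨j, hjD, hj1⟩ := hDf
            have hw := hweak j hjD
            rw [eutil Sn j, eutil σ' j, if_pos hj1, if_pos hj1] at hw
            linarith
          · by_cases hDc : ∃ j ∈ D, ¬ (j : ℕ) < NF + NU
            · obtain ⟨j, hjD, hj1⟩ := hDc
              have hj0 : ¬ (j : ℕ) < NF := fun hc => hj1 (by omega)
              have hw := hweak j hjD
              rw [eutil Sn j, eutil σ' j, if_neg hj0, if_neg hj0, if_neg hj1, if_neg hj1] at hw
              rw [efid, efid'] at hw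
              nlinarith
            · have hDU : ∀ j ∈ D, NF ≤ (j : ℕ) ∧ (j : ℕ) < NF + NU := by
                intro j hj
                constructor
                · by_contra hc
                  exact hDf ⟨j, hj, by omega⟩
                · by_contra hc
                  exact hDc ⟨j, hj, hc⟩
              have haH' : 1 - B n ≤ aH' :=
                estimate_H hn1 hphL0 hph hphH1 halphaF0 halphaF halphaU0 halphaU halphaC hδ
                  (fun k hk => (hsep n hn0 k hk).2) σ' D hDU hagree
              have hPH1 : PH ≤ 1 := by linarith
              nlinarith
        · -- the strict gainer is contingent
          rw [eutil Sn i, eutil σ' i, if_neg hiF, if_neg hiF, if_neg hiU, if_neg hiU] at hgain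
          rw [efid, efid'] at hgain
          nlinarith

end TwoRoundVoting
end
end

section
/- (Proposition 1.) Consider one-round voting in which every agent is contingent (α_F = α_U = 0, so all n agents are contingent with 0-1 utilities), and suppose the signal distribution is biased: P_hL > 1/2 or P_hH < 1/2 (with 0 < P_hL < P_hH < 1). Then for every sequence {Σ̂_n} of pure symmetric one-round strategy profiles, there is no sequence of nonnegative reals {ε_n} with lim_{n→∞} ε_n = 0 such that Σ̂_n is an ε_n-strong Bayes Nash equilibrium for every n. Equivalently, there exist δ > 0 and infinitely many n for which Σ̂_n is not a δ-strong Bayes Nash equilibrium. -/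
noncomputable section
open Classical Finset Filter
open scoped Classical

namespace OneRoundVoting

/-- Probability of signal `h` in world state `k` (`true` = `H`, `false` = `L`). -/
def sigP (phH phL : ℝ) (k : Bool) : ℝ := if k then phH else phL

/-- Probability of the signal vector `s` conditioned on world state `k`
(signals are i.i.d. conditioned on the state). -/
def sigWeight (phH phL : ℝ) (k : Bool) {n : ℕ} (s : Fin n → Bool) : ℝ :=
  ∏ i, if s i then sigP phH phL k else 1 - sigP phH phL k

/-- Number of `A`-votes in a vote vector. -/
def countA {n : ℕ} (v : Fin n → Bool) : ℕ :=
  (Finset.univ.filter fun i => v i = true).card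

/-- A (behavioral) strategy profile of the one-round voting game with `n` agents:
`s i m` is the probability that agent `i` votes `A` upon receiving signal `m`. -/
structure OneRound (n : ℕ) where
  s : Fin n → Bool → ℝ
  nonneg : ∀ i m, 0 ≤ s i m
  le_one : ∀ i m, s i m ≤ 1

/-- Probability that `A` wins (strictly more than `n/2` `A`-votes), given state `k`. -/
def prAwins1 (phH phL : ℝ) {n : ℕ} (σ : OneRound n) (k : Bool) : ℝ :=
  ∑ s : Fin n → Bool, ∑ v : Fin n → Bool,
    sigWeight phH phL k s *
      (∏ i, if v i then σ.s i (s i) else 1 - σ.s i (s i)) *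
      (if 2 * countA v > n then 1 else 0)

/-- Expected utility of a contingent agent with 0-1 utilities: the probability that the
winner is `A` when the state is `H` or `R` when the state is `L` (this is the fidelity,
and it is the common expected utility of all agents when all agents are contingent). -/
def utilC (PH PL phH phL : ℝ) {n : ℕ} (σ : OneRound n) : ℝ :=
  PL * (1 - prAwins1 phH phL σ false) + PH * prAwins1 phH phL σ true

/-- `ε`-strong Bayes Nash equilibrium of the one-round game with all agents contingent. -/
def IsEpsStrongBNE1 (PH PL phH phL : ℝ) {n : ℕ} (σ : OneRound n) (ε : ℝ) : Prop :=
  ¬ ∃ (D : Finset (Fin n)) (σ' : OneRound n),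
      (∀ i, i ∉ D → σ'.s i = σ.s i) ∧
      (∀ i ∈ D, utilC PH PL phH phL σ ≤ utilC PH PL phH phL σ') ∧
      (∃ i ∈ D, utilC PH PL phH phL σ + ε < utilC PH PL phH phL σ')

/-- A profile is pure and symmetric if all agents play the same deterministic strategy. -/
def PureSymmetric {n : ℕ} (σ : OneRound n) : Prop :=
  ∃ f : Bool → Bool, ∀ (i : Fin n) (m : Bool), σ.s i m = if f m then 1 else 0

/-! ### Auxiliary development -/

/-- Probability that `A` wins when each agent independently votes `A` with probability `r`. -/
def Pwin (r : ℝ) (n : ℕ) : ℝ :=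
  ∑ v : Fin n → Bool,
    (∏ i, if v i then r else 1 - r) * (if 2 * countA v > n then 1 else 0)

lemma sum_prod_bool {n : ℕ} (F : Fin n → Bool → ℝ) :
    ∑ v : Fin n → Bool, ∏ i, F i (v i) = ∏ i, (F i true + F i false) := by
  rw [← Fintype.prod_sum F]; simp

lemma prod_count {n : ℕ} (v : Fin n → Bool) (c : ℝ) :
    (∏ i, if v i then c else 1) = c ^ countA v := by
  rw [countA, Finset.prod_ite, Finset.prod_const, Finset.prod_const_one, mul_one]

lemma sum_weight_pow {n : ℕ} (a b c : ℝ) :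
    ∑ v : Fin n → Bool, (∏ i, if v i then a else b) * c ^ countA v
      = (a * c + b) ^ n := by
  have h : ∀ v : Fin n → Bool,
      (∏ i, if v i then a else b) * c ^ countA v
        = ∏ i, (if v i then a * c else b) := by
    intro v
    rw [← prod_count v c, ← Finset.prod_mul_distrib]
    refine Finset.prod_congr rfl fun i _ => ?_
    by_cases h : v i <;> simp [h]
  simp_rw [h]
  rw [show (∑ v : Fin n → Bool, ∏ i, if v i then a * c else b)
      = ∏ _i : Fin n, ((if true then a * c else b) + (if false then a * c else b)) from
    sum_prod_bool fun _ s => if s then a * c else b]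
  simp

lemma sum_weight {n : ℕ} (a b : ℝ) :
    ∑ v : Fin n → Bool, (∏ i, if v i then a else b) = (a + b) ^ n := by
  have := sum_weight_pow (n := n) a b 1
  simpa using this

lemma weight_nonneg {n : ℕ} {r : ℝ} (h0 : 0 ≤ r) (h1 : r ≤ 1) (v : Fin n → Bool) :
    0 ≤ ∏ i, (if v i then r else 1 - r) := by
  refine Finset.prod_nonneg fun i _ => ?_
  by_cases h : v i <;> simp [h] <;> linarith

lemma Pwin_nonneg {r : ℝ} (h0 : 0 ≤ r) (h1 : r ≤ 1) (n : ℕ) : 0 ≤ Pwin r n := by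
  refine Finset.sum_nonneg fun v _ => ?_
  have := weight_nonneg h0 h1 v
  positivity

lemma Pwin_le_one {r : ℝ} (h0 : 0 ≤ r) (h1 : r ≤ 1) (n : ℕ) : Pwin r n ≤ 1 := by
  have hm : ∑ v : Fin n → Bool, (∏ i, if v i then r else 1 - r) = 1 := by
    rw [sum_weight]; simp
  rw [← hm, Pwin]
  refine Finset.sum_le_sum fun v _ => ?_
  have hw := weight_nonneg h0 h1 v
  have : (if 2 * countA v > n then (1:ℝ) else 0) ≤ 1 := by split <;> norm_num
  nlinarith

lemma one_sub_Pwin_le {r : ℝ} (hr : 1/2 < r) (hr1 : r < 1) (n : ℕ) :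
    1 - Pwin r n ≤ 2 * (4 * r * (1 - r)) ^ (n / 2) := by
  have h1r : (0:ℝ) < 1 - r := by linarith
  have hr0 : (0:ℝ) < r := by linarith
  set l : ℝ := r / (1 - r) with hl
  have hl1 : 1 ≤ l := by rw [hl, le_div_iff₀ h1r]; linarith
  have hl0 : 0 < l := by positivity
  set m := n / 2 with hm
  have hmass : ∑ v : Fin n → Bool, (∏ i, if v i then r else 1 - r) = 1 := by
    rw [sum_weight]; simp
  have key : ∀ v : Fin n → Bool,
      (∏ i, if v i then r else 1 - r) * (if 2 * countA v > n then (1:ℝ) else 0)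
      + (∏ i, if v i then r else 1 - r) * (if 2 * countA v > n then (0:ℝ) else 1)
      = ∏ i, if v i then r else 1 - r := by
    intro v; by_cases h : 2 * countA v > n <;> simp [h]
  have hsplit : Pwin r n + ∑ v : Fin n → Bool,
      (∏ i, if v i then r else 1 - r) * (if 2 * countA v > n then (0:ℝ) else 1) = 1 := by
    rw [Pwin, ← Finset.sum_add_distrib]
    simp_rw [key]
    exact hmass
  have hstep : ∑ v : Fin n → Bool, (∏ i, if v i then r else 1 - r)
          * (if 2 * countA v > n then (0:ℝ) else 1)
      ≤ ∑ v : Fin n → Bool, ((∏ i, if v i then r else 1 - r)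
          * (1/l) ^ countA v) * l ^ m := by
    refine Finset.sum_le_sum fun v _ => ?_
    rw [mul_assoc]
    refine mul_le_mul_of_nonneg_left ?_ (weight_nonneg (le_of_lt hr0) (le_of_lt hr1) v)
    by_cases h : 2 * countA v > n
    · rw [if_pos h]; positivity
    · rw [if_neg h]
      have hca : countA v ≤ m := by
        rw [hm, Nat.le_div_iff_mul_le (by norm_num)]
        omega
      have hp : l ^ countA v ≤ l ^ m := pow_le_pow_right₀ hl1 hca
      have hpos : (0:ℝ) < l ^ countA v := by positivity
      have hrew : (1/l) ^ countA v * l ^ m = l ^ m / l ^ countA v := by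
        rw [one_div, inv_pow]; ring
      rw [hrew, le_div_iff₀ hpos, one_mul]; exact hp
  have hsum : ∑ v : Fin n → Bool, ((∏ i, if v i then r else 1 - r)
          * (1/l) ^ countA v) * l ^ m
      = (2 * (1 - r)) ^ n * l ^ m := by
    rw [← Finset.sum_mul, sum_weight_pow]
    have : r * (1/l) + (1 - r) = 2 * (1 - r) := by
      rw [hl]; field_simp; ring
    rw [this]
  have harith : (2 * (1 - r)) ^ n * l ^ m ≤ 2 * (4 * r * (1 - r)) ^ m := by
    have hu0 : (0:ℝ) ≤ 2 * (1 - r) := by linarith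
    have hu1 : 2 * (1 - r) ≤ 1 := by linarith
    have hn : n = 2 * m + n % 2 := by rw [hm]; omega
    have hpn : (2 * (1 - r)) ^ n ≤ (2 * (1 - r)) ^ (2 * m) := by
      rw [hn, pow_add]
      have h2 : (2 * (1 - r)) ^ (n % 2) ≤ 1 := pow_le_one₀ hu0 hu1
      nlinarith [pow_nonneg hu0 (2 * m)]
    have heq : (2 * (1 - r)) ^ (2 * m) * l ^ m = (4 * r * (1 - r)) ^ m := by
      rw [pow_mul, ← mul_pow]
      congr 1
      rw [hl]
      field_simp
      ring
    have hq : (0:ℝ) ≤ (4 * r * (1 - r)) ^ m := by positivity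
    nlinarith [pow_pos hl0 m]
  have := le_trans hstep (le_of_eq hsum)
  linarith

lemma Pwin_le {r : ℝ} (hr0 : 0 < r) (hr : r < 1/2) (n : ℕ) :
    Pwin r n ≤ 2 * (4 * r * (1 - r)) ^ (n / 2) := by
  have h1r : (0:ℝ) < 1 - r := by linarith
  set l : ℝ := (1 - r) / r with hl
  have hl1 : 1 ≤ l := by rw [hl, le_div_iff₀ hr0]; linarith
  have hl0 : 0 < l := by positivity
  set m := n / 2 with hm
  have hstep : Pwin r n
      ≤ ∑ v : Fin n → Bool, ((∏ i, if v i then r else 1 - r)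
          * l ^ countA v) * (1/l) ^ (m + 1) := by
    rw [Pwin]
    refine Finset.sum_le_sum fun v _ => ?_
    rw [mul_assoc]
    refine mul_le_mul_of_nonneg_left ?_ (weight_nonneg (le_of_lt hr0) (by linarith) v)
    by_cases h : 2 * countA v > n
    · rw [if_pos h]
      have hca : m + 1 ≤ countA v := by
        have : 2 * m ≤ n := by rw [hm]; omega
        omega
      have hp : l ^ (m+1) ≤ l ^ countA v := pow_le_pow_right₀ hl1 hca
      have hpos : (0:ℝ) < l ^ (m+1) := by positivity
      have hrew : l ^ countA v * (1/l) ^ (m+1) = l ^ countA v / l ^ (m+1) := by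
        rw [one_div, inv_pow]; ring
      rw [hrew, le_div_iff₀ hpos, one_mul]; exact hp
    · rw [if_neg h]; positivity
  have hsum : ∑ v : Fin n → Bool, ((∏ i, if v i then r else 1 - r)
          * l ^ countA v) * (1/l) ^ (m + 1)
      = (2 * (1 - r)) ^ n * (1/l) ^ (m + 1) := by
    rw [← Finset.sum_mul, sum_weight_pow]
    have : r * l + (1 - r) = 2 * (1 - r) := by
      rw [hl]; field_simp; ring
    rw [this]
  have harith : (2 * (1 - r)) ^ n * (1/l) ^ (m + 1) ≤ 2 * (4 * r * (1 - r)) ^ m := by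
    have hu1 : (1:ℝ) ≤ 2 * (1 - r) := by linarith
    have hn : n ≤ 2 * (m + 1) := by omega
    have hil : (0:ℝ) < (1/l) ^ (m+1) := by positivity
    have hpn : (2 * (1 - r)) ^ n ≤ (2 * (1 - r)) ^ (2 * (m+1)) :=
      pow_le_pow_right₀ hu1 hn
    have heq : (2 * (1 - r)) ^ (2 * (m+1)) * (1/l) ^ (m+1) = (4 * r * (1 - r)) ^ (m+1) := by
      rw [pow_mul, ← mul_pow]
      congr 1
      rw [hl]
      field_simp
      ring
    have hq0 : (0:ℝ) ≤ 4 * r * (1 - r) := by positivity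
    have hq1 : 4 * r * (1 - r) ≤ 1 := by nlinarith [sq_nonneg (1 - 2*r)]
    have hq : (0:ℝ) ≤ (4 * r * (1 - r)) ^ m := by positivity
    calc (2 * (1 - r)) ^ n * (1/l) ^ (m + 1)
        ≤ (2 * (1 - r)) ^ (2 * (m+1)) * (1/l) ^ (m+1) :=
          mul_le_mul_of_nonneg_right hpn (le_of_lt hil)
      _ = (4 * r * (1 - r)) ^ (m+1) := heq
      _ = (4 * r * (1 - r)) ^ m * (4 * r * (1 - r)) := by rw [pow_succ]
      _ ≤ (4 * r * (1 - r)) ^ m * 1 := by nlinarith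
      _ ≤ 2 * (4 * r * (1 - r)) ^ m := by nlinarith
  calc Pwin r n ≤ _ := hstep
    _ = _ := hsum
    _ ≤ _ := harith

lemma prAwins_eq (phH phL : ℝ) {n : ℕ} (σ : OneRound n) (g : Bool → ℝ)
    (hg : ∀ i m, σ.s i m = g m) (k : Bool) :
    prAwins1 phH phL σ k
      = Pwin (sigP phH phL k * g true + (1 - sigP phH phL k) * g false) n := by
  set p := sigP phH phL k with hp
  rw [prAwins1, Finset.sum_comm, Pwin]
  refine Finset.sum_congr rfl fun v _ => ?_
  simp only [hg]
  have h1 : ∀ s : Fin n → Bool,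
      sigWeight phH phL k s * (∏ i, if v i then g (s i) else 1 - g (s i))
        = ∏ i, ((if s i then p else 1 - p) * (if v i then g (s i) else 1 - g (s i))) := by
    intro s
    rw [sigWeight, ← Finset.prod_mul_distrib, ← hp]
  have h2 : ∑ s : Fin n → Bool,
      ∏ i, ((if s i then p else 1 - p) * (if v i then g (s i) else 1 - g (s i)))
      = ∏ i, ((if (true:Bool) then p else 1 - p) * (if v i then g true else 1 - g true)
            + (if (false:Bool) then p else 1 - p) * (if v i then g false else 1 - g false)) :=
    sum_prod_bool fun i b => (if b then p else 1 - p) * (if v i then g b else 1 - g b)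
  calc ∑ s : Fin n → Bool,
        sigWeight phH phL k s * (∏ i, if v i then g (s i) else 1 - g (s i))
          * (if 2 * countA v > n then 1 else 0)
      = (∑ s : Fin n → Bool,
          sigWeight phH phL k s * (∏ i, if v i then g (s i) else 1 - g (s i)))
          * (if 2 * countA v > n then 1 else 0) := by rw [Finset.sum_mul]
    _ = (∏ i, if v i then p * g true + (1 - p) * g false
              else 1 - (p * g true + (1 - p) * g false))
          * (if 2 * countA v > n then 1 else 0) := by
        rw [show (∑ s : Fin n → Bool,
            sigWeight phH phL k s * (∏ i, if v i then g (s i) else 1 - g (s i)))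
          = ∑ s : Fin n → Bool,
            ∏ i, ((if s i then p else 1 - p) * (if v i then g (s i) else 1 - g (s i))) from
          Finset.sum_congr rfl fun s _ => h1 s, h2]
        congr 1
        refine Finset.prod_congr rfl fun i _ => ?_
        by_cases h : v i <;> simp [h] <;> ring

set_option maxHeartbeats 2000000 in
/-- **Proposition 1.** In one-round voting where every agent is contingent (0-1 utilities)
and the signal distribution is biased (`P_hL > 1/2` or `P_hH < 1/2`), no sequence of pure
symmetric profiles can be `ε n`-strong Bayes Nash equilibria for nonnegative `ε n → 0`. -/
theorem no_pure_symmetric_equilibrium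
    (PH PL phH phL : ℝ)
    (hPH : 0 < PH) (hPL : 0 < PL) (hPsum : PH + PL = 1)
    (hphL0 : 0 < phL) (hph : phL < phH) (hphH1 : phH < 1)
    (hbias : 1 / 2 < phL ∨ phH < 1 / 2)
    (S : ∀ n : ℕ, OneRound n)
    (hsym : ∀ n, PureSymmetric (S n)) :
    ¬ ∃ ε : ℕ → ℝ, (∀ n, 0 ≤ ε n) ∧ Tendsto ε atTop (nhds 0) ∧
      ∀ n, IsEpsStrongBNE1 PH PL phH phL (S n) (ε n) := by
  rintro ⟨ε, hε0, hεlim, hBNE⟩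
  have hphH0 : 0 < phH := lt_trans hphL0 hph
  have hphL1 : phL < 1 := lt_trans hph hphH1
  -- constants
  set qL : ℝ := 4 * phL * (1 - phL) with hqL_def
  set qH : ℝ := 4 * phH * (1 - phH) with hqH_def
  set Q : ℝ := max qL qH with hQ_def
  have hqL0 : 0 ≤ qL := by rw [hqL_def]; nlinarith
  have hqH0 : 0 ≤ qH := by rw [hqH_def]; nlinarith
  have hQ0 : 0 ≤ Q := le_trans hqL0 (le_max_left _ _)
  have hQ1 : Q < 1 := by
    rcases hbias with hb | hb
    · have hbH : 1/2 < phH := lt_trans hb hph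
      have h1 : qL < 1 := by rw [hqL_def]; nlinarith
      have h2 : qH < 1 := by rw [hqH_def]; nlinarith
      exact max_lt h1 h2
    · have hbL : phL < 1/2 := lt_trans hph hb
      have h1 : qL < 1 := by rw [hqL_def]; nlinarith
      have h2 : qH < 1 := by rw [hqH_def]; nlinarith
      exact max_lt h1 h2
  set e : ℝ := (phH - phL) / 4 with he_def
  have he0 : 0 < e := by rw [he_def]; linarith
  have he4 : e < 1/4 := by rw [he_def]; linarith
  set q' : ℝ := 4 * (1/2 - e) * (1 - (1/2 - e)) with hq'_def
  have hq'0 : 0 ≤ q' := by rw [hq'_def]; nlinarith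
  have hq'1 : q' < 1 := by rw [hq'_def]; nlinarith
  set B : ℝ := max Q q' with hB_def
  have hB0 : 0 ≤ B := le_trans hQ0 (le_max_left _ _)
  have hB1 : B < 1 := max_lt hQ1 hq'1
  -- Fact 2 : upper bound on the utility of the pure symmetric profile
  have fact2 : ∀ n : ℕ, utilC PH PL phH phL (S n) ≤ max PH PL + 2 * Q ^ (n / 2) := by
    intro n
    obtain ⟨f, hf⟩ := hsym n
    have hWL := prAwins_eq phH phL (S n) (fun m => if f m then (1:ℝ) else 0)
      (fun i m => hf i m) false
    have hWH := prAwins_eq phH phL (S n) (fun m => if f m then (1:ℝ) else 0)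
      (fun i m => hf i m) true
    simp only [utilC]
    have hQm : (0:ℝ) ≤ Q ^ (n / 2) := pow_nonneg hQ0 _
    have hqLQ : qL ^ (n / 2) ≤ Q ^ (n / 2) := pow_le_pow_left₀ hqL0 (le_max_left _ _) _
    have hqHQ : qH ^ (n / 2) ≤ Q ^ (n / 2) := pow_le_pow_left₀ hqH0 (le_max_right _ _) _
    have hPLm : PL ≤ max PH PL := le_max_right _ _
    have hPHm : PH ≤ max PH PL := le_max_left _ _
    have hPL1 : PL ≤ 1 := by linarith
    have hPH1 : PH ≤ 1 := by linarith
    cases hft : f true <;> cases hff : f false <;> rw [hft, hff] at hWL hWH <;>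
      norm_num [sigP] at hWL hWH <;> rw [hWL, hWH]
    -- f ≡ false : everyone votes R
    · have hW0 := Pwin_nonneg (le_refl (0:ℝ)) (by norm_num) n
      have hW1 := Pwin_le_one (le_refl (0:ℝ)) (by norm_num) n
      have t1 : 0 ≤ (max PH PL - PL) * (1 - Pwin 0 n) :=
        mul_nonneg (by linarith) (by linarith)
      have t2 : 0 ≤ (max PH PL - PH) * Pwin 0 n :=
        mul_nonneg (by linarith) hW0
      nlinarith
    -- f true = false, f false = true : vote against signal
    · rcases hbias with hb | hb
      · -- phL > 1/2, hence 1 - phH < 1/2 : A rarely wins in state H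
        have hbH : 1/2 < phH := lt_trans hb hph
        have hWH' : Pwin (1 - phH) n ≤ 2 * (4 * (1 - phH) * (1 - (1 - phH))) ^ (n / 2) :=
          Pwin_le (by linarith) (by linarith) n
        have hbase : 4 * (1 - phH) * (1 - (1 - phH)) = qH := by rw [hqH_def]; ring
        rw [hbase] at hWH'
        have hWL0 := Pwin_nonneg (by linarith : (0:ℝ) ≤ 1 - phL) (by linarith) n
        have hWL1 := Pwin_le_one (by linarith : (0:ℝ) ≤ 1 - phL) (by linarith) n
        have hWH0 := Pwin_nonneg (by linarith : (0:ℝ) ≤ 1 - phH) (by linarith) n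
        have t1 : PL * (1 - Pwin (1 - phL) n) ≤ PL := by nlinarith
        have t2 : PH * Pwin (1 - phH) n ≤ 2 * qH ^ (n / 2) := by nlinarith
        linarith
      · -- phH < 1/2, hence 1 - phL > 1/2 : A almost surely wins in state L
        have hbL : phL < 1/2 := lt_trans hph hb
        have hWL' : 1 - Pwin (1 - phL) n ≤ 2 * (4 * (1 - phL) * (1 - (1 - phL))) ^ (n / 2) :=
          one_sub_Pwin_le (by linarith) (by linarith) n
        have hbase : 4 * (1 - phL) * (1 - (1 - phL)) = qL := by rw [hqL_def]; ring
        rw [hbase] at hWL'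
        have hWH0 := Pwin_nonneg (by linarith : (0:ℝ) ≤ 1 - phH) (by linarith) n
        have hWH1 := Pwin_le_one (by linarith : (0:ℝ) ≤ 1 - phH) (by linarith) n
        have hWL1 := Pwin_le_one (by linarith : (0:ℝ) ≤ 1 - phL) (by linarith) n
        have t1 : PL * (1 - Pwin (1 - phL) n) ≤ 2 * qL ^ (n / 2) := by nlinarith
        have t2 : PH * Pwin (1 - phH) n ≤ PH := by nlinarith
        linarith
    -- f true = true, f false = false : vote with signal
    · rcases hbias with hb | hb
      · -- phL > 1/2 : A almost surely wins in state L
        have hWL' : 1 - Pwin phL n ≤ 2 * (4 * phL * (1 - phL)) ^ (n / 2) :=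
          one_sub_Pwin_le hb hphL1 n
        rw [← hqL_def] at hWL'
        have hWH0 := Pwin_nonneg (le_of_lt hphH0) (le_of_lt hphH1) n
        have hWH1 := Pwin_le_one (le_of_lt hphH0) (le_of_lt hphH1) n
        have hWL1 := Pwin_le_one (le_of_lt hphL0) (le_of_lt hphL1) n
        have t1 : PL * (1 - Pwin phL n) ≤ 2 * qL ^ (n / 2) := by nlinarith
        have t2 : PH * Pwin phH n ≤ PH := by nlinarith
        linarith
      · -- phH < 1/2 : A rarely wins in state H
        have hWH' : Pwin phH n ≤ 2 * (4 * phH * (1 - phH)) ^ (n / 2) :=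
          Pwin_le hphH0 hb n
        rw [← hqH_def] at hWH'
        have hWL0 := Pwin_nonneg (le_of_lt hphL0) (le_of_lt hphL1) n
        have hWL1 := Pwin_le_one (le_of_lt hphL0) (le_of_lt hphL1) n
        have hWH0 := Pwin_nonneg (le_of_lt hphH0) (le_of_lt hphH1) n
        have t1 : PL * (1 - Pwin phL n) ≤ PL := by nlinarith
        have t2 : PH * Pwin phH n ≤ 2 * qH ^ (n / 2) := by nlinarith
        linarith
    -- f ≡ true : everyone votes A
    · have hW0 := Pwin_nonneg (by norm_num : (0:ℝ) ≤ 1) (le_refl 1) n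
      have hW1 := Pwin_le_one (by norm_num : (0:ℝ) ≤ 1) (le_refl 1) n
      have t1 : 0 ≤ (max PH PL - PL) * (1 - Pwin 1 n) :=
        mul_nonneg (by linarith) (by linarith)
      have t2 : 0 ≤ (max PH PL - PH) * Pwin 1 n :=
        mul_nonneg (by linarith) hW0
      nlinarith
  -- Fact 1 : a profitable joint deviation
  have fact1 : ∀ n : ℕ, ∃ σ' : OneRound n,
      1 - 2 * q' ^ (n / 2) ≤ utilC PH PL phH phL σ' := by
    intro n
    have hs2 : phL + phH < 2 := by linarith
    have hs0 : 0 < phL + phH := by linarith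
    refine ⟨⟨fun _ m => if m then 1 - (phL + phH)/4 else 1/2 - (phL + phH)/4,
      fun i m => by split <;> linarith,
      fun i m => by split <;> linarith⟩, ?_⟩
    set σ' : OneRound n := ⟨fun _ m => if m then 1 - (phL + phH)/4 else 1/2 - (phL + phH)/4,
      fun i m => by split <;> linarith,
      fun i m => by split <;> linarith⟩ with hσ'
    have hWL := prAwins_eq phH phL σ'
      (fun m => if m then 1 - (phL + phH)/4 else 1/2 - (phL + phH)/4)
      (fun i m => rfl) false
    have hWH := prAwins_eq phH phL σ'
      (fun m => if m then 1 - (phL + phH)/4 else 1/2 - (phL + phH)/4)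
      (fun i m => rfl) true
    have eL : sigP phH phL false * (if (true:Bool) then 1 - (phL + phH)/4 else 1/2 - (phL + phH)/4)
        + (1 - sigP phH phL false) *
          (if (false:Bool) then 1 - (phL + phH)/4 else 1/2 - (phL + phH)/4) = 1/2 - e := by
      simp only [sigP]
      rw [he_def]
      norm_num
      ring
    have eH : sigP phH phL true * (if (true:Bool) then 1 - (phL + phH)/4 else 1/2 - (phL + phH)/4)
        + (1 - sigP phH phL true) *
          (if (false:Bool) then 1 - (phL + phH)/4 else 1/2 - (phL + phH)/4) = 1/2 + e := by
      simp only [sigP]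
      rw [he_def]
      norm_num
      ring
    rw [eL] at hWL
    rw [eH] at hWH
    simp only [utilC]
    rw [hWL, hWH]
    have hWLb : Pwin (1/2 - e) n ≤ 2 * q' ^ (n / 2) := by
      have := Pwin_le (by linarith : (0:ℝ) < 1/2 - e) (by linarith) n
      rw [← hq'_def] at this
      exact this
    have hWHb : 1 - Pwin (1/2 + e) n ≤ 2 * q' ^ (n / 2) := by
      have := one_sub_Pwin_le (by linarith : (1:ℝ)/2 < 1/2 + e) (by linarith) n
      have hbase : 4 * (1/2 + e) * (1 - (1/2 + e)) = q' := by rw [hq'_def]; ring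
      rw [hbase] at this
      exact this
    have hWL0 := Pwin_nonneg (by linarith : (0:ℝ) ≤ 1/2 - e) (by linarith) n
    have hWH1 := Pwin_le_one (by linarith : (0:ℝ) ≤ 1/2 + e) (by linarith) n
    have t1 : PL * (1 - 2 * q' ^ (n / 2)) ≤ PL * (1 - Pwin (1/2 - e) n) :=
      mul_le_mul_of_nonneg_left (by linarith) (le_of_lt hPL)
    have t2 : PH * (1 - 2 * q' ^ (n / 2)) ≤ PH * Pwin (1/2 + e) n :=
      mul_le_mul_of_nonneg_left (by linarith) (le_of_lt hPH)
    nlinarith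
  -- limit argument
  have hmin : 0 < min PH PL := lt_min hPH hPL
  have hndiv : Tendsto (fun n : ℕ => n / 2) atTop atTop :=
    Filter.tendsto_atTop_atTop.mpr fun b => ⟨2 * b, fun n hn => by omega⟩
  have hBpow : Tendsto (fun n : ℕ => B ^ (n / 2)) atTop (nhds 0) :=
    (tendsto_pow_atTop_nhds_zero_of_lt_one hB0 hB1).comp hndiv
  have hcomb : Tendsto (fun n => ε n + 4 * B ^ (n / 2)) atTop (nhds 0) := by
    have h := hεlim.add (hBpow.const_mul (4:ℝ))
    simpa using h
  have hev : ∀ᶠ n in atTop, ε n + 4 * B ^ (n / 2) < min PH PL :=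
    (tendsto_order.1 hcomb).2 (min PH PL) hmin
  obtain ⟨n, hn1, hnlt⟩ := ((eventually_ge_atTop 1).and hev).exists
  obtain ⟨σ', hσ'⟩ := fact1 n
  have h2 := fact2 n
  have hq'B : q' ^ (n / 2) ≤ B ^ (n / 2) := pow_le_pow_left₀ hq'0 (le_max_right _ _) _
  have hQB : Q ^ (n / 2) ≤ B ^ (n / 2) := pow_le_pow_left₀ hQ0 (le_max_left _ _) _
  have hmaxmin : max PH PL + min PH PL = PH + PL := max_add_min PH PL
  have hgap : utilC PH PL phH phL (S n) + ε n < utilC PH PL phH phL σ' := by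
    linarith
  exact hBNE n ⟨Finset.univ, σ', fun i hi => absurd (Finset.mem_univ i) hi,
    fun i _ => by linarith [hε0 n],
    ⟨⟨0, hn1⟩, Finset.mem_univ _, hgap⟩⟩


end OneRoundVoting
end
end

section
/- (Algebraic core of Lemma 1 ('positive').) Let P_H, P_L > 0 with P_H + P_L = 1, let δ > 0, and let λ_H, λ_L, λ'_H, λ'_L ∈ [0,1] satisfy P_H·λ_H + P_L·λ_L ≤ 1 − δ and P_H·λ'_H + P_L·λ'_L > 1 − δ·min(P_H, P_L). Let v_1 (a friendly utility) be a real-valued function on {H,L}×{A,R} with v_1(H,A) ≥ v_1(L,A) > v_1(L,R) ≥ v_1(H,R), and let v_2 (an unfriendly utility) satisfy v_2(L,R) ≥ v_2(H,R) > v_2(H,A) ≥ v_2(L,A). For j ∈ {1,2} define u_j = P_H·(λ_H·v_j(H,A) + (1−λ_H)·v_j(H,R)) + P_L·((1−λ_L)·v_j(L,A) + λ_L·v_j(L,R)), and u'_j by the same formula with λ'_H, λ'_L in place of λ_H, λ_L. Then u'_1 ≥ u_1 or u'_2 ≥ u_2. -/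
/-- **Algebraic core of Lemma 1 ("positive").**
`lH` (resp. `lL`) is the probability that `A` wins given state `H` (resp. that `R` wins
given state `L`) under a profile `Σ`, and `lH'`, `lL'` the corresponding probabilities
under a deviating profile `Σ'`.  Utilities `v k o` are indexed by the state
(`true` = `H`) and the outcome (`true` = `A` wins).  If the fidelity of `Σ` is at most
`1 − δ` and the fidelity of `Σ'` exceeds `1 − δ·min P_H P_L`, then the friendly agent or
the unfriendly agent weakly gains in expected utility. -/
theorem friendly_or_unfriendly_weakly_gains
    (PH PL δ : ℝ) (hPH : 0 < PH) (hPL : 0 < PL) (hPsum : PH + PL = 1) (hδ : 0 < δ)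
    (lH lL lH' lL' : ℝ)
    (hlH : lH ∈ Set.Icc (0 : ℝ) 1) (hlL : lL ∈ Set.Icc (0 : ℝ) 1)
    (hlH' : lH' ∈ Set.Icc (0 : ℝ) 1) (hlL' : lL' ∈ Set.Icc (0 : ℝ) 1)
    (hfid : PH * lH + PL * lL ≤ 1 - δ)
    (hfid' : PH * lH' + PL * lL' > 1 - δ * min PH PL)
    (v₁ v₂ : Bool → Bool → ℝ)
    -- friendly: v₁(H,A) ≥ v₁(L,A) > v₁(L,R) ≥ v₁(H,R)
    (hv₁ : v₁ false true ≤ v₁ true true ∧ v₁ false false < v₁ false true ∧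
      v₁ true false ≤ v₁ false false)
    -- unfriendly: v₂(L,R) ≥ v₂(H,R) > v₂(H,A) ≥ v₂(L,A)
    (hv₂ : v₂ true false ≤ v₂ false false ∧ v₂ true true < v₂ true false ∧
      v₂ false true ≤ v₂ true true) :
    (PH * (lH * v₁ true true + (1 - lH) * v₁ true false) +
        PL * ((1 - lL) * v₁ false true + lL * v₁ false false) ≤
      PH * (lH' * v₁ true true + (1 - lH') * v₁ true false) +
        PL * ((1 - lL') * v₁ false true + lL' * v₁ false false)) ∨
    (PH * (lH * v₂ true true + (1 - lH) * v₂ true false) +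
        PL * ((1 - lL) * v₂ false true + lL * v₂ false false) ≤
      PH * (lH' * v₂ true true + (1 - lH') * v₂ true false) +
        PL * ((1 - lL') * v₂ false true + lL' * v₂ false false)) := by
  obtain ⟨h11, h12, h13⟩ := hv₁
  obtain ⟨h21, h22, h23⟩ := hv₂
  have hminmax : min PH PL + max PH PL = PH + PL := min_add_max PH PL
  have hab : δ * max PH PL < PH * (lH' - lH) + PL * (lL' - lL) := by nlinarith
  have hmaxpos : 0 < max PH PL := lt_of_lt_of_le hPH (le_max_left PH PL)
  rcases le_total (PL * (lL' - lL)) (PH * (lH' - lH)) with h | h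
  · left
    have hapos : 0 < PH * (lH' - lH) := by nlinarith
    have hαβ : 0 ≤ v₁ true true - v₁ true false - (v₁ false true - v₁ false false) := by
      linarith
    have hβ : 0 ≤ v₁ false true - v₁ false false := by linarith
    have k1 := mul_nonneg hapos.le hαβ
    have k2 := mul_nonneg (sub_nonneg.2 h) hβ
    have key : PH * (lH' * v₁ true true + (1 - lH') * v₁ true false) +
        PL * ((1 - lL') * v₁ false true + lL' * v₁ false false) -
        (PH * (lH * v₁ true true + (1 - lH) * v₁ true false) +
        PL * ((1 - lL) * v₁ false true + lL * v₁ false false)) =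
        PH * (lH' - lH) * (v₁ true true - v₁ true false - (v₁ false true - v₁ false false)) +
        (PH * (lH' - lH) - PL * (lL' - lL)) * (v₁ false true - v₁ false false) := by ring
    linarith [k1, k2, key]
  · right
    have hbpos : 0 < PL * (lL' - lL) := by nlinarith
    have hηγ : 0 ≤ v₂ false false - v₂ false true - (v₂ true false - v₂ true true) := by
      linarith
    have hγ : 0 ≤ v₂ true false - v₂ true true := by linarith
    have k1 := mul_nonneg hbpos.le hηγ
    have k2 := mul_nonneg (sub_nonneg.2 h) hγ
    have key : PH * (lH' * v₂ true true + (1 - lH') * v₂ true false) +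
        PL * ((1 - lL') * v₂ false true + lL' * v₂ false false) -
        (PH * (lH * v₂ true true + (1 - lH) * v₂ true false) +
        PL * ((1 - lL) * v₂ false true + lL * v₂ false false)) =
        PL * (lL' - lL) * (v₂ false false - v₂ false true - (v₂ true false - v₂ true true)) +
        (PL * (lL' - lL) - PH * (lH' - lH)) * (v₂ true false - v₂ true true) := by ring
    linarith [k1, k2, key]
end

section
/- (Lemma 2, concrete form: fidelity of informative+threshold profiles converges to 1.) Fix P_H, P_L > 0 with P_H + P_L = 1, reals 0 < P_hL < P_hH < 1, and α_F, α_U ∈ [0, 1/2) with α_C := 1 − α_F − α_U > 0. For each n set n_F = ⌊α_F·n⌋, n_U = ⌊α_U·n⌋, n_C = n − n_F − n_U, and let Y^H_n and Y^L_n be binomially distributed random variables with parameters (n_C, P_hH) and (n_C, P_hL) respectively. Suppose (T_{n,i})_{1 ≤ i ≤ n_C} are real thresholds for which there exist δ > 0 and n_0 such that for all n ≥ n_0 and all i: n_F + n_C·P_hL + δ·n ≤ T_{n,i} ≤ n_F + n_C·P_hH − δ·n. Define, for k ∈ {H,L}, the event 'A wins under k' as n_F + #{i ≤ n_C : n_F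 + Y^k_n ≥ T_{n,i}} > n/2. Then A_n := P_H·Pr(A wins under H) + P_L·(1 − Pr(A wins under L)) → 1 as n → ∞. -/
noncomputable section
open Classical Finset Filter
open scoped Classical

namespace ThresholdFidelity

/-- The binomial probability mass function: `Pr(Y = y)` for `Y ~ Binomial(N, p)`. -/
def binomPMF (N : ℕ) (p : ℝ) (y : ℕ) : ℝ :=
  (N.choose y : ℝ) * p ^ y * (1 - p) ^ (N - y)

/-- Number of friendly agents. -/
def numF (alphaF : ℝ) (n : ℕ) : ℕ := ⌊alphaF * n⌋₊

/-- Number of contingent agents. -/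
def numC (alphaF alphaU : ℝ) (n : ℕ) : ℕ := n - ⌊alphaF * n⌋₊ - ⌊alphaU * n⌋₊

/-- Probability that `A` wins under the informative+threshold profile, given that the
number of `h`-signals among the `n_C` contingent agents is `Binomial(n_C, p)`:
the first-round outcome is `x = n_F + y`, the second-round `A`-count is
`n_F + #{i < n_C : n_F + y ≥ T i}`, and `A` wins iff this exceeds `n/2`. -/
def prAwins (alphaF alphaU : ℝ) (n : ℕ) (T : ℕ → ℝ) (p : ℝ) : ℝ :=
  ∑ y ∈ Finset.range (numC alphaF alphaU n + 1),
    binomPMF (numC alphaF alphaU n) p y *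
      (if 2 * (numF alphaF n +
          ((Finset.range (numC alphaF alphaU n)).filter
            fun i => T i ≤ (numF alphaF n : ℝ) + (y : ℝ)).card) > n
        then 1 else 0)


/-- Evaluation of a Bernstein polynomial gives the binomial PMF. -/
private lemma binomPMF_eq_eval (N : ℕ) (p : ℝ) (y : ℕ) :
    binomPMF N p y = (bernsteinPolynomial ℝ N y).eval p := by
  simp [binomPMF, bernsteinPolynomial]

private lemma binomPMF_nonneg {N : ℕ} {p : ℝ} (hp0 : 0 ≤ p) (hp1 : p ≤ 1) (y : ℕ) :
    0 ≤ binomPMF N p y := by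
  have h1 : (0:ℝ) ≤ 1 - p := by linarith
  exact mul_nonneg (mul_nonneg (Nat.cast_nonneg _) (pow_nonneg hp0 _)) (pow_nonneg h1 _)

private lemma sum_binomPMF (N : ℕ) (p : ℝ) :
    ∑ y ∈ Finset.range (N + 1), binomPMF N p y = 1 := by
  have h := congrArg (Polynomial.eval p) (bernsteinPolynomial.sum ℝ N)
  simpa [binomPMF, bernsteinPolynomial, Polynomial.eval_finset_sum, mul_assoc] using h

private lemma var_binomPMF (N : ℕ) (p : ℝ) :
    ∑ y ∈ Finset.range (N + 1), ((N : ℝ) * p - y) ^ 2 * binomPMF N p y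
      = N * p * (1 - p) := by
  have h := congrArg (Polynomial.eval p) (bernsteinPolynomial.variance ℝ N)
  simp [bernsteinPolynomial, Polynomial.eval_finset_sum, nsmul_eq_mul, mul_assoc] at h
  rw [mul_assoc, ← h]
  exact Finset.sum_congr rfl fun y _ => by simp only [binomPMF]; ring

/-- A Chebyshev-type tail bound for the binomial distribution. -/
private lemma chebyshev (N : ℕ) (p c : ℝ) (hp0 : 0 ≤ p) (hp1 : p ≤ 1) (hc : 0 < c)
    (f : ℕ → ℝ) (h0 : ∀ y, 0 ≤ f y) (h1 : ∀ y, f y ≤ 1)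
    (hf : ∀ y, y ∈ Finset.range (N + 1) → f y ≠ 0 → c ≤ |(N : ℝ) * p - y|) :
    ∑ y ∈ Finset.range (N + 1), binomPMF N p y * f y ≤ N * p * (1 - p) / c ^ 2 := by
  have key : ∑ y ∈ Finset.range (N + 1), binomPMF N p y * f y ≤
      ∑ y ∈ Finset.range (N + 1), (((N : ℝ) * p - y) ^ 2 / c ^ 2) * binomPMF N p y := by
    apply Finset.sum_le_sum
    intro y hy
    rcases eq_or_ne (f y) 0 with h | h
    · rw [h, mul_zero]
      have := binomPMF_nonneg hp0 hp1 (N := N) y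
      positivity
    · rw [mul_comm]
      apply mul_le_mul_of_nonneg_right _ (binomPMF_nonneg hp0 hp1 y)
      have hge := hf y hy h
      have h2 : c ^ 2 ≤ ((N : ℝ) * p - y) ^ 2 := by
        rw [← sq_abs ((N : ℝ) * p - y)]
        exact pow_le_pow_left₀ hc.le hge 2
      calc f y ≤ 1 := h1 y
        _ ≤ ((N : ℝ) * p - y) ^ 2 / c ^ 2 := by
            rw [le_div_iff₀ (by positivity), one_mul]; exact h2
  calc ∑ y ∈ Finset.range (N + 1), binomPMF N p y * f y
      ≤ ∑ y ∈ Finset.range (N + 1), (((N : ℝ) * p - y) ^ 2 / c ^ 2) * binomPMF N p y := key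
    _ = (∑ y ∈ Finset.range (N + 1), ((N : ℝ) * p - y) ^ 2 * binomPMF N p y) / c ^ 2 := by
        rw [Finset.sum_div]
        exact Finset.sum_congr rfl fun y _ => by ring
    _ = N * p * (1 - p) / c ^ 2 := by rw [var_binomPMF]

set_option maxHeartbeats 2000000 in
/-- **Lemma 2 (concrete form).** If the thresholds `T n i` (for the `n_C` contingent
agents `i`) are constantly separable, then the fidelity
`A_n = P_H·Pr(A wins | H) + P_L·(1 − Pr(A wins | L))` of the informative+threshold
profile converges to `1`. -/
theorem fidelity_of_threshold_profiles_tendsto_one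
    (PH PL phH phL alphaF alphaU : ℝ)
    (hPH : 0 < PH) (hPL : 0 < PL) (hPsum : PH + PL = 1)
    (hphL0 : 0 < phL) (hph : phL < phH) (hphH1 : phH < 1)
    (halphaF0 : 0 ≤ alphaF) (halphaF : alphaF < 1 / 2)
    (halphaU0 : 0 ≤ alphaU) (halphaU : alphaU < 1 / 2)
    (halphaC : alphaF + alphaU < 1)
    (T : ℕ → ℕ → ℝ)
    (hsep : ∃ (δ : ℝ) (n₀ : ℕ), 0 < δ ∧ ∀ n, n₀ ≤ n → ∀ i, i < numC alphaF alphaU n →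
      (numF alphaF n : ℝ) + (numC alphaF alphaU n : ℝ) * phL + δ * n ≤ T n i ∧
      T n i ≤ (numF alphaF n : ℝ) + (numC alphaF alphaU n : ℝ) * phH - δ * n) :
    Tendsto
      (fun n => PH * prAwins alphaF alphaU n (T n) phH +
        PL * (1 - prAwins alphaF alphaU n (T n) phL))
      atTop (nhds 1) := by
  obtain ⟨δ, n₀, hδ, hT⟩ := hsep
  have hphH0 : 0 < phH := hphL0.trans hph
  have hphL1 : phL < 1 := hph.trans hphH1
  -- basic counting facts for large n
  have hFU : ∀ n : ℕ, 1 ≤ n → (⌊alphaF * n⌋₊ + ⌊alphaU * n⌋₊ : ℕ) ≤ n := by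
    intro n hn
    have h1 : (⌊alphaF * n⌋₊ : ℝ) ≤ alphaF * n := Nat.floor_le (by positivity)
    have h2 : (⌊alphaU * n⌋₊ : ℝ) ≤ alphaU * n := Nat.floor_le (by positivity)
    have : ((⌊alphaF * n⌋₊ + ⌊alphaU * n⌋₊ : ℕ) : ℝ) ≤ n := by
      push_cast
      nlinarith [(Nat.one_le_cast (α := ℝ)).mpr hn]
    exact_mod_cast this
  -- the bound function tends to 0
  have hbnd : Tendsto (fun n : ℕ => (n : ℝ) / (δ * n) ^ 2) atTop (nhds 0) := by
    have : ∀ᶠ n : ℕ in atTop, (n : ℝ) / (δ * n) ^ 2 = (1 / δ ^ 2) * (1 / n) := by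
      filter_upwards [eventually_ge_atTop 1] with n hn
      have hn' : (0 : ℝ) < n := by exact_mod_cast hn
      field_simp
    rw [tendsto_congr' this]
    have h := (tendsto_one_div_atTop_nhds_zero_nat).const_mul (1 / δ ^ 2)
    rw [mul_zero] at h
    exact h
  -- Pr(A wins | H) → 1
  have hH : Tendsto (fun n => prAwins alphaF alphaU n (T n) phH) atTop (nhds 1) := by
    have key : ∀ᶠ n : ℕ in atTop,
        1 - prAwins alphaF alphaU n (T n) phH ≤ (n : ℝ) / (δ * n) ^ 2 ∧
        0 ≤ 1 - prAwins alphaF alphaU n (T n) phH := by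
      filter_upwards [eventually_ge_atTop (max n₀ 1)] with n hn
      have hn1 : 1 ≤ n := le_trans (le_max_right _ _) hn
      have hn0 : n₀ ≤ n := le_trans (le_max_left _ _) hn
      have hnR : (0 : ℝ) < n := by exact_mod_cast hn1
      set N := numC alphaF alphaU n with hN
      set nF := numF alphaF n with hnF
      set ind : ℕ → ℝ := fun y =>
        (if 2 * (nF + ((Finset.range N).filter
            fun i => T n i ≤ (nF : ℝ) + (y : ℝ)).card) > n then 1 else 0) with hind
      have hind01 : ∀ y, ind y = 0 ∨ ind y = 1 := by
        intro y; by_cases h : 2 * (nF + ((Finset.range N).filter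
            fun i => T n i ≤ (nF : ℝ) + (y : ℝ)).card) > n <;> simp [hind, h]
      have hsplit : 1 - prAwins alphaF alphaU n (T n) phH =
          ∑ y ∈ Finset.range (N + 1), binomPMF N phH y * (1 - ind y) := by
        have h1 : prAwins alphaF alphaU n (T n) phH =
            ∑ y ∈ Finset.range (N + 1), binomPMF N phH y * ind y := rfl
        rw [h1]
        nth_rewrite 1 [← sum_binomPMF N phH]
        rw [← Finset.sum_sub_distrib]
        exact Finset.sum_congr rfl fun y _ => by ring
      rw [hsplit]
      constructor
      · have := chebyshev N phH (δ * n) hphH0.le hphH1.le (by positivity)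
          (fun y => 1 - ind y)
          (fun y => by rcases hind01 y with h | h <;> simp [h])
          (fun y => by rcases hind01 y with h | h <;> simp [h])
          ?_
        · refine le_trans this ?_
          have hNn : (N : ℝ) ≤ n := by
            exact_mod_cast Nat.sub_le _ _ |>.trans (Nat.sub_le _ _)
          apply div_le_div_of_nonneg_right _ (by positivity)
          have hN0 : (0:ℝ) ≤ N := Nat.cast_nonneg N
          have hpp : phH * (1 - phH) ≤ 1 := by nlinarith [sq_nonneg (phH - 1)]
          calc (N:ℝ) * phH * (1 - phH) = N * (phH * (1 - phH)) := by ring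
            _ ≤ N * 1 := by exact mul_le_mul_of_nonneg_left hpp hN0
            _ ≤ n := by linarith
        · intro y hy hne
          by_contra hlt
          push_neg at hlt
          rw [abs_lt] at hlt
          obtain ⟨hlt1, hlt2⟩ := hlt
          -- y > N * phH - δ n, so all thresholds are met
          have hcard : ((Finset.range N).filter
              fun i => T n i ≤ (nF : ℝ) + (y : ℝ)).card = N := by
            rw [Finset.filter_true_of_mem, Finset.card_range]
            intro i hi
            rw [Finset.mem_range] at hi
            have := (hT n hn0 i hi).2
            linarith
          have hwin : 2 * (nF + ((Finset.range N).filter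
              fun i => T n i ≤ (nF : ℝ) + (y : ℝ)).card) > n := by
            rw [hcard]
            have hU : 2 * ⌊alphaU * n⌋₊ < n := by
              have h2 : (⌊alphaU * n⌋₊ : ℝ) ≤ alphaU * n := Nat.floor_le (by positivity)
              have : ((2 * ⌊alphaU * n⌋₊ : ℕ) : ℝ) < n := by push_cast; nlinarith
              exact_mod_cast this
            have hfu := hFU n hn1
            simp only [hN, hnF, numC, numF] at *
            omega
          simp [hind, hwin] at hne
      · apply Finset.sum_nonneg
        intro y _
        apply mul_nonneg (binomPMF_nonneg hphH0.le hphH1.le y)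
        rcases hind01 y with h | h <;> simp [h]
    have h1 : Tendsto (fun n => 1 - prAwins alphaF alphaU n (T n) phH) atTop (nhds 0) := by
      apply squeeze_zero' (key.mono fun n h => h.2) (key.mono fun n h => h.1) hbnd
    have := h1.const_sub 1
    simpa using this
  -- Pr(A wins | L) → 0
  have hL : Tendsto (fun n => prAwins alphaF alphaU n (T n) phL) atTop (nhds 0) := by
    have key : ∀ᶠ n : ℕ in atTop,
        prAwins alphaF alphaU n (T n) phL ≤ (n : ℝ) / (δ * n) ^ 2 ∧
        0 ≤ prAwins alphaF alphaU n (T n) phL := by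
      filter_upwards [eventually_ge_atTop (max n₀ 1)] with n hn
      have hn1 : 1 ≤ n := le_trans (le_max_right _ _) hn
      have hn0 : n₀ ≤ n := le_trans (le_max_left _ _) hn
      have hnR : (0 : ℝ) < n := by exact_mod_cast hn1
      set N := numC alphaF alphaU n with hN
      set nF := numF alphaF n with hnF
      set ind : ℕ → ℝ := fun y =>
        (if 2 * (nF + ((Finset.range N).filter
            fun i => T n i ≤ (nF : ℝ) + (y : ℝ)).card) > n then 1 else 0) with hind
      have hind01 : ∀ y, ind y = 0 ∨ ind y = 1 := by
        intro y; by_cases h : 2 * (nF + ((Finset.range N).filter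
            fun i => T n i ≤ (nF : ℝ) + (y : ℝ)).card) > n <;> simp [hind, h]
      constructor
      · have := chebyshev N phL (δ * n) hphL0.le hphL1.le (by positivity) ind
          (fun y => by rcases hind01 y with h | h <;> simp [h])
          (fun y => by rcases hind01 y with h | h <;> simp [h])
          ?_
        · refine le_trans this ?_
          have hNn : (N : ℝ) ≤ n := by
            exact_mod_cast Nat.sub_le _ _ |>.trans (Nat.sub_le _ _)
          apply div_le_div_of_nonneg_right _ (by positivity)
          have hN0 : (0:ℝ) ≤ N := Nat.cast_nonneg N
          have hpp : phL * (1 - phL) ≤ 1 := by nlinarith [sq_nonneg (phL - 1)]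
          calc (N:ℝ) * phL * (1 - phL) = N * (phL * (1 - phL)) := by ring
            _ ≤ N * 1 := by exact mul_le_mul_of_nonneg_left hpp hN0
            _ ≤ n := by linarith
        · intro y hy hne
          by_contra hlt
          push_neg at hlt
          rw [abs_lt] at hlt
          obtain ⟨hlt1, hlt2⟩ := hlt
          -- y < N * phL + δ n, so no thresholds are met
          have hcard : ((Finset.range N).filter
              fun i => T n i ≤ (nF : ℝ) + (y : ℝ)).card = 0 := by
            rw [Finset.card_eq_zero, Finset.filter_eq_empty_iff]
            intro i hi
            rw [Finset.mem_range] at hi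
            have := (hT n hn0 i hi).1
            push_neg
            linarith
          have hF : 2 * nF ≤ n := by
            have h2 : (⌊alphaF * n⌋₊ : ℝ) ≤ alphaF * n := Nat.floor_le (by positivity)
            have : ((2 * ⌊alphaF * n⌋₊ : ℕ) : ℝ) ≤ n := by push_cast; nlinarith
            simp only [hnF, numF]
            exact_mod_cast this
          have hnowin : ¬(2 * (nF + ((Finset.range N).filter
              fun i => T n i ≤ (nF : ℝ) + (y : ℝ)).card) > n) := by
            rw [hcard]; omega
          simp [hind, hnowin] at hne
      · unfold prAwins
        apply Finset.sum_nonneg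
        intro y _
        apply mul_nonneg (binomPMF_nonneg hphL0.le hphL1.le y)
        split_ifs <;> norm_num
    exact squeeze_zero' (key.mono fun n h => h.2) (key.mono fun n h => h.1) hbnd
  have := (hH.const_mul PH).add (((hL.const_sub 1).const_mul PL))
  simpa [hPsum] using this

end ThresholdFidelity
end
end

section
/- (Lemma 5: the sincere threshold is constantly separable.) Fix P_H, P_L > 0 with P_H + P_L = 1, reals 0 < P_hL < P_hH < 1, α_F, α_U ∈ [0, 1/2) with α_C := 1 − α_F − α_U > 0, and an arbitrary real constant c. For each n set n_F = ⌊α_F·n⌋, n_C = n − ⌊α_F·n⌋ − ⌊α_U·n⌋, and define x*_n = n_F + (c + n_C·ln((1−P_hL)/(1−P_hH))) / ln( P_hH·(1−P_hL) / ((1−P_hH)·P_hL) ). Then there exist δ > 0 and n_0 such that for all n ≥ n_0: n_F + n_C·P_hL + δ·n ≤ x*_n ≤ n_F + n_C·P_hH − δ·n. (Taking c = ln(P_L/P_H) gives the sincere threshold for 0-1 utilities; taking c = ln(P_L·w_L/(P_H·w_H)) for any fixed w_H, w_L > 0 gives the general-valuation sincere threshold.) -/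
lemma kl_pos {p q : ℝ} (hp0 : 0 < p) (hp1 : p < 1) (hq0 : 0 < q) (hq1 : q < 1)
    (hne : p ≠ q) :
    0 < p * Real.log (p / q) + (1 - p) * Real.log ((1 - p) / (1 - q)) := by
  have hp1' : (0:ℝ) < 1 - p := by linarith
  have hq1' : (0:ℝ) < 1 - q := by linarith
  have h1 : Real.log (q / p) < q / p - 1 :=
    Real.log_lt_sub_one_of_pos (by positivity) (by
      intro h
      apply hne
      field_simp at h
      linarith)
  have h2 : Real.log ((1 - q) / (1 - p)) < (1 - q) / (1 - p) - 1 :=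
    Real.log_lt_sub_one_of_pos (by positivity) (by
      intro h
      apply hne
      field_simp at h
      linarith)
  have e1 : Real.log (p / q) = -Real.log (q / p) := by
    rw [← Real.log_inv]; congr 1; field_simp
  have e2 : Real.log ((1 - p) / (1 - q)) = -Real.log ((1 - q) / (1 - p)) := by
    rw [← Real.log_inv]; congr 1; field_simp
  have f1 : p * (q / p - 1) = q - p := by field_simp
  have f2 : (1 - p) * ((1 - q) / (1 - p) - 1) = p - q := by field_simp; ring
  have g1 := mul_lt_mul_of_pos_left h1 hp0
  have g2 := mul_lt_mul_of_pos_left h2 hp1'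
  rw [e1, e2]
  nlinarith [g1, g2]


/-- **Lemma 5: the sincere threshold is constantly separable.**
With `n_F = ⌊α_F·n⌋` and `n_C = n − ⌊α_F·n⌋ − ⌊α_U·n⌋`, the sincere threshold
`x*_n = n_F + (c + n_C·ln((1−P_hL)/(1−P_hH))) / ln(P_hH(1−P_hL)/((1−P_hH)P_hL))`
(for an arbitrary real constant `c`; `c = ln(P_L/P_H)` gives the 0-1-utility sincere
threshold) satisfies, for some `δ > 0` and all large `n`,
`n_F + n_C·P_hL + δn ≤ x*_n ≤ n_F + n_C·P_hH − δn`. -/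
theorem sincere_threshold_constantly_separable
    (PH PL phH phL alphaF alphaU c : ℝ)
    (hPH : 0 < PH) (hPL : 0 < PL) (hPsum : PH + PL = 1)
    (hphL0 : 0 < phL) (hph : phL < phH) (hphH1 : phH < 1)
    (halphaF0 : 0 ≤ alphaF) (halphaF : alphaF < 1 / 2)
    (halphaU0 : 0 ≤ alphaU) (halphaU : alphaU < 1 / 2)
    (halphaC : alphaF + alphaU < 1) :
    ∃ (δ : ℝ) (n₀ : ℕ), 0 < δ ∧ ∀ n : ℕ, n₀ ≤ n →
      ((⌊alphaF * n⌋₊ : ℝ) + ((n - ⌊alphaF * n⌋₊ - ⌊alphaU * n⌋₊ : ℕ) : ℝ) * phL + δ * n ≤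
        (⌊alphaF * n⌋₊ : ℝ) +
          (c + ((n - ⌊alphaF * n⌋₊ - ⌊alphaU * n⌋₊ : ℕ) : ℝ) *
              Real.log ((1 - phL) / (1 - phH))) /
            Real.log (phH * (1 - phL) / ((1 - phH) * phL))) ∧
      ((⌊alphaF * n⌋₊ : ℝ) +
          (c + ((n - ⌊alphaF * n⌋₊ - ⌊alphaU * n⌋₊ : ℕ) : ℝ) *
              Real.log ((1 - phL) / (1 - phH))) /
            Real.log (phH * (1 - phL) / ((1 - phH) * phL)) ≤
        (⌊alphaF * n⌋₊ : ℝ) + ((n - ⌊alphaF * n⌋₊ - ⌊alphaU * n⌋₊ : ℕ) : ℝ) * phH - δ * n) := by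
  have hphH0 : 0 < phH := lt_trans hphL0 hph
  have hphL1 : phL < 1 := lt_trans hph hphH1
  have h1L : (0:ℝ) < 1 - phL := by linarith
  have h1H : (0:ℝ) < 1 - phH := by linarith
  set a : ℝ := Real.log ((1 - phL) / (1 - phH)) with ha
  set L : ℝ := Real.log (phH * (1 - phL) / ((1 - phH) * phL)) with hL
  have hLpos : 0 < L := by
    apply Real.log_pos
    rw [lt_div_iff₀ (by positivity)]
    nlinarith
  have haexp : a = Real.log (1 - phL) - Real.log (1 - phH) :=
    Real.log_div h1L.ne' h1H.ne'
  have hLexp : L = Real.log phH + Real.log (1 - phL)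
      - (Real.log (1 - phH) + Real.log phL) := by
    rw [hL, Real.log_div (by positivity) (by positivity),
      Real.log_mul (by positivity) (by positivity),
      Real.log_mul (by positivity) (by positivity)]
  set D1 : ℝ := a - phL * L with hD1
  set D2 : ℝ := phH * L - a with hD2
  have hD1pos : 0 < D1 := by
    have h := kl_pos hphL0 hphL1 hphH0 hphH1 (ne_of_lt hph)
    rw [Real.log_div hphL0.ne' hphH0.ne', Real.log_div h1L.ne' h1H.ne'] at h
    rw [hD1, haexp, hLexp]
    linarith
  have hD2pos : 0 < D2 := by
    have h := kl_pos hphH0 hphH1 hphL0 hphL1 (ne_of_gt hph)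
    rw [Real.log_div hphH0.ne' hphL0.ne', Real.log_div h1H.ne' h1L.ne'] at h
    rw [hD2, haexp, hLexp]
    linarith
  set αC : ℝ := 1 - alphaF - alphaU with hαC
  have hαCpos : 0 < αC := by rw [hαC]; linarith
  set D : ℝ := min D1 D2 with hD
  have hDpos : 0 < D := lt_min hD1pos hD2pos
  have hDD1 : D ≤ D1 := min_le_left _ _
  have hDD2 : D ≤ D2 := min_le_right _ _
  clear_value a L D1 D2 αC D
  refine ⟨αC * D / (2 * L), ⌈2 * |c| / (αC * D)⌉₊, by positivity, ?_⟩
  intro n hn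
  have hn' : 2 * |c| / (αC * D) ≤ (n : ℝ) := Nat.ceil_le.mp hn
  have hcbound : 2 * |c| ≤ αC * D * n := by
    rw [div_le_iff₀ (by positivity)] at hn'
    linarith
  set nF := ⌊alphaF * n⌋₊ with hnF
  set nU := ⌊alphaU * n⌋₊ with hnU
  have hnn : (0:ℝ) ≤ (n:ℝ) := Nat.cast_nonneg n
  have hFle : (nF : ℝ) ≤ alphaF * n := Nat.floor_le (by positivity)
  have hUle : (nU : ℝ) ≤ alphaU * n := Nat.floor_le (by positivity)
  have haun : (alphaF + alphaU) * n ≤ n := by nlinarith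
  have hsum : nF + nU ≤ n := by
    have h : ((nF + nU : ℕ) : ℝ) ≤ (n : ℝ) := by
      push_cast
      linarith only [hFle, hUle, haun]
    exact_mod_cast h
  have hmcast : ((n - nF - nU : ℕ) : ℝ) = (n : ℝ) - nF - nU := by
    have h1 : nF ≤ n := by omega
    have h2 : nU ≤ n - nF := by omega
    rw [Nat.cast_sub h2, Nat.cast_sub h1]
  rw [hmcast]
  clear_value nF nU
  set m : ℝ := (n : ℝ) - nF - nU with hm
  clear_value m
  have hmge : αC * n ≤ m := by
    rw [hm, hαC]
    have e : (1 - alphaF - alphaU) * (n:ℝ) = n - alphaF * n - alphaU * n := by ring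
    linarith only [hFle, hUle, e]
  have hc1 : -c ≤ αC * D * n / 2 := by
    have := neg_le_abs c; linarith
  have hc2 : c ≤ αC * D * n / 2 := by
    have := le_abs_self c; linarith
  have hmD1 : αC * D * n ≤ m * D1 := by
    calc αC * D * n = (αC * n) * D := by ring
      _ ≤ (αC * n) * D1 := mul_le_mul_of_nonneg_left hDD1 (mul_nonneg hαCpos.le hnn)
      _ ≤ m * D1 := mul_le_mul_of_nonneg_right hmge hD1pos.le
  have hmD2 : αC * D * n ≤ m * D2 := by
    calc αC * D * n = (αC * n) * D := by ring
      _ ≤ (αC * n) * D2 := mul_le_mul_of_nonneg_left hDD2 (mul_nonneg hαCpos.le hnn)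
      _ ≤ m * D2 := mul_le_mul_of_nonneg_right hmge hD2pos.le
  have hδL : αC * D / (2 * L) * n * L = αC * D * n / 2 := by
    field_simp
  constructor
  · have key : m * phL + αC * D / (2 * L) * n ≤ (c + m * a) / L := by
      rw [le_div_iff₀ hLpos]
      have hma : m * a = m * phL * L + m * D1 := by rw [hD1]; ring
      have e2 : (m * phL + αC * D / (2 * L) * n) * L
          = m * phL * L + αC * D / (2 * L) * n * L := by ring
      linarith only [hmD1, hc1, hδL, hma, e2]
    linarith
  · have key : (c + m * a) / L ≤ m * phH - αC * D / (2 * L) * n := by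
      rw [div_le_iff₀ hLpos]
      have hma : m * a = m * phH * L - m * D2 := by rw [hD2]; ring
      have e2 : (m * phH - αC * D / (2 * L) * n) * L
          = m * phH * L - αC * D / (2 * L) * n * L := by ring
      linarith only [hmD2, hc2, hδL, hma, e2]
    linarith
end

section
/- (Claim 1: a contingent agent's expected utility strictly decreases when fidelity drops substantially.) Let B ≥ 1 be a real number, let P_H, P_L > 0 with P_H + P_L = 1, and let λ_H, λ_L, λ'_H, λ'_L ∈ [0,1]. Set e := 1 − (P_H·λ_H + P_L·λ_L) and suppose e > 0 and P_H·λ'_H + P_L·λ'_L ≤ 1 − (2B+2)·e. Then for all reals d_H, d_L ∈ [1, B]: P_H·(λ'_H − λ_H)·d_H + P_L·(λ'_L − λ_L)·d_L < 0. -/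
/-- **Claim 1.** Here `lH` (resp. `lL`) is the probability that `A` wins given state `H`
(resp. that `R` wins given state `L`) under a profile `Σ` with fidelity `1 − e`, and
`lH'`, `lL'` those of a deviating profile `Σ'` with fidelity at most `1 − (2B+2)e`.
For a contingent agent with utility gaps `dH = v(H,A) − v(H,R) ∈ [1,B]` and
`dL = v(L,R) − v(L,A) ∈ [1,B]`, the utility difference `u(Σ') − u(Σ)` is strictly
negative. -/
theorem contingent_agent_strictly_loses
    (B PH PL lH lL lH' lL' : ℝ) (hB : 1 ≤ B)
    (hPH : 0 < PH) (hPL : 0 < PL) (hPsum : PH + PL = 1)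
    (hlH : lH ∈ Set.Icc (0 : ℝ) 1) (hlL : lL ∈ Set.Icc (0 : ℝ) 1)
    (hlH' : lH' ∈ Set.Icc (0 : ℝ) 1) (hlL' : lL' ∈ Set.Icc (0 : ℝ) 1)
    (he : 0 < 1 - (PH * lH + PL * lL))
    (hfid' : PH * lH' + PL * lL' ≤ 1 - (2 * B + 2) * (1 - (PH * lH + PL * lL))) :
    ∀ dH dL : ℝ, 1 ≤ dH → dH ≤ B → 1 ≤ dL → dL ≤ B →
      PH * (lH' - lH) * dH + PL * (lL' - lL) * dL < 0 := by
  intro dH dL h1 h2 h3 h4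
  set e : ℝ := 1 - (PH * lH + PL * lL) with hee
  have hx : PH * (lH' - lH) ≤ e := by
    have h1 : PH * lH' ≤ PH := by nlinarith [hlH'.2]
    nlinarith [mul_nonneg hPL.le (sub_nonneg.2 hlL.2)]
  have hy : PL * (lL' - lL) ≤ e := by
    have h1 : PL * lL' ≤ PL := by nlinarith [hlL'.2]
    nlinarith [mul_nonneg hPH.le (sub_nonneg.2 hlH.2)]
  have hsum : PH * (lH' - lH) + PL * (lL' - lL) ≤ -(2 * B + 1) * e := by
    nlinarith
  nlinarith [mul_nonneg (sub_nonneg.2 hx) (sub_nonneg.2 h1),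
    mul_nonneg (sub_nonneg.2 hy) (sub_nonneg.2 h3),
    mul_le_mul_of_nonneg_left h2 he.le, mul_le_mul_of_nonneg_left h4 he.le]
end

section
/- (Claim 2: friendly and unfriendly agents cannot both gain.) Let B ≥ 1 be a real number, let P_H, P_L > 0 with P_H + P_L = 1, and let λ_H, λ_L, λ'_H, λ'_L ∈ [0,1]. Set e := 1 − (P_H·λ_H + P_L·λ_L) (so e ≥ 0), a := P_H·(λ'_H − λ_H), and b := P_L·(λ'_L − λ_L). Let p, q, r, s be reals with 0 < p ≤ B, −B ≤ q < 0, p ≥ −q, and −B ≤ r < 0, 0 < s ≤ B, s ≥ −r. Then: (1) if a·p + b·q > 2B(B+2)·e, then a·r + b·s < 0; and (2) if a·r + b·s > 2B(B+2)·e, then a·p + b·q < 0. -/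
/-- Core computation for Claim 2: if `a + b ≤ e` (with `e ≥ 0`) and the friendly gain
`a·p + b·q` exceeds `2B(B+2)e` while the unfriendly gain `a·r + b·s` is nonnegative,
we get a contradiction. -/
lemma claim2_aux (B e a b p q r s : ℝ) (hB : 1 ≤ B) (he0 : 0 ≤ e)
    (habe : a + b ≤ e)
    (hp0 : 0 < p) (hpB : p ≤ B) (hqB : -B ≤ q) (hq0 : q < 0) (hpq : -q ≤ p)
    (hrB : -B ≤ r) (hr0 : r < 0) (hs0 : 0 < s) (hsB : s ≤ B) (hrs : -r ≤ s)
    (h1 : a * p + b * q > 2 * B * (B + 2) * e)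
    (h2 : 0 ≤ a * r + b * s) : False := by
  have hBpos : (0 : ℝ) < B := by linarith
  have hD : 0 ≤ p * s - r * q := by
    nlinarith [mul_le_mul hpq hrs (by linarith : (0:ℝ) ≤ -r) hp0.le]
  have hDB1 : p * s - r * q ≤ B * s := by
    have h1' : 0 < r * q := mul_pos_of_neg_of_neg hr0 hq0
    nlinarith [mul_le_mul_of_nonneg_right hpB hs0.le]
  have hEnn : 0 ≤ 2 * B * (B + 2) * e := by positivity
  have h1' : 0 < a * p + b * q := by linarith
  have key_a : a * (p * s - r * q) = s * (a * p + b * q) + (-q) * (a * r + b * s) := by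
    ring
  have key_b : b * (p * s - r * q) = (-r) * (a * p + b * q) + p * (a * r + b * s) := by
    ring
  have haD : 0 < a * (p * s - r * q) := by
    have t1 : 0 < s * (a * p + b * q) := mul_pos hs0 h1'
    have t2 : 0 ≤ (-q) * (a * r + b * s) := mul_nonneg (by linarith) h2
    linarith
  have hD' : 0 < p * s - r * q := by
    rcases hD.lt_or_eq with h | h
    · exact h
    · rw [← h, mul_zero] at haD; exact absurd haD (lt_irrefl 0)
  have hapos : 0 < a := by
    by_contra h
    push_neg at h
    nlinarith [mul_nonneg (neg_nonneg.2 h) hD]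
  have hbpos : 0 ≤ b := by
    have t1 : 0 ≤ (-r) * (a * p + b * q) := mul_nonneg (by linarith) h1'.le
    have t2 : 0 ≤ p * (a * r + b * s) := mul_nonneg hp0.le h2
    have hbD : 0 ≤ b * (p * s - r * q) := by linarith
    by_contra h
    push_neg at h
    nlinarith [mul_pos (neg_pos.2 h) hD']
  have hae : a ≤ e := by linarith
  have hbig : s * (2 * B * (B + 2) * e) < a * (B * s) := by
    have t1 : s * (2 * B * (B + 2) * e) < s * (a * p + b * q) :=
      mul_lt_mul_of_pos_left h1 hs0
    have t2 : 0 ≤ (-q) * (a * r + b * s) := mul_nonneg (by linarith) h2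
    have t3 : a * (p * s - r * q) ≤ a * (B * s) :=
      mul_le_mul_of_nonneg_left hDB1 hapos.le
    linarith
  have h3 : 2 * B * (B + 2) * e < a * B := by
    have := lt_of_mul_lt_mul_right
      (by linarith : (2 * B * (B + 2) * e) * s < (a * B) * s) hs0.le
    linarith
  nlinarith [h3, mul_le_mul_of_nonneg_left hae (by positivity : (0:ℝ) ≤ 2 * B * (B + 2)),
    mul_pos hapos hBpos, mul_pos (mul_pos hapos hBpos) hBpos]

/-- **Claim 2.** Here `lH` (resp. `lL`) is the probability that `A` wins given state `H`
(resp. that `R` wins given state `L`) under a profile `Σ` with fidelity `1 − e`, and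
`lH'`, `lL'` those of a deviating profile `Σ'`; `a := P_H (lH' − lH)`,
`b := P_L (lL' − lL)`.  For a friendly agent, `p = v₁(H,A) − v₁(H,R)` and
`q = v₁(L,R) − v₁(L,A)` satisfy `0 < p ≤ B`, `−B ≤ q < 0`, `p ≥ −q`, and `a·p + b·q` is
its utility gain; for an unfriendly agent, `r = v₂(H,A) − v₂(H,R)` and
`s = v₂(L,R) − v₂(L,A)` satisfy `−B ≤ r < 0`, `0 < s ≤ B`, `s ≥ −r`, and `a·r + b·s` is
its utility gain.  A gain of more than `2B(B+2)e` for one type forces a strict loss for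
the other. -/
theorem predetermined_types_cannot_both_gain
    (B PH PL lH lL lH' lL' : ℝ) (hB : 1 ≤ B)
    (hPH : 0 < PH) (hPL : 0 < PL) (hPsum : PH + PL = 1)
    (hlH : lH ∈ Set.Icc (0 : ℝ) 1) (hlL : lL ∈ Set.Icc (0 : ℝ) 1)
    (hlH' : lH' ∈ Set.Icc (0 : ℝ) 1) (hlL' : lL' ∈ Set.Icc (0 : ℝ) 1)
    (p q r s : ℝ)
    (hp0 : 0 < p) (hpB : p ≤ B) (hqB : -B ≤ q) (hq0 : q < 0) (hpq : -q ≤ p)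
    (hrB : -B ≤ r) (hr0 : r < 0) (hs0 : 0 < s) (hsB : s ≤ B) (hrs : -r ≤ s) :
    (PH * (lH' - lH) * p + PL * (lL' - lL) * q >
        2 * B * (B + 2) * (1 - (PH * lH + PL * lL)) →
      PH * (lH' - lH) * r + PL * (lL' - lL) * s < 0) ∧
    (PH * (lH' - lH) * r + PL * (lL' - lL) * s >
        2 * B * (B + 2) * (1 - (PH * lH + PL * lL)) →
      PH * (lH' - lH) * p + PL * (lL' - lL) * q < 0) := by
  obtain ⟨hlH0, hlH1⟩ := hlH
  obtain ⟨hlL0, hlL1⟩ := hlL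
  obtain ⟨hlH'0, hlH'1⟩ := hlH'
  obtain ⟨hlL'0, hlL'1⟩ := hlL'
  have he0 : 0 ≤ 1 - (PH * lH + PL * lL) := by
    have h1 : 0 ≤ PH * (1 - lH) := mul_nonneg hPH.le (by linarith)
    have h2 : 0 ≤ PL * (1 - lL) := mul_nonneg hPL.le (by linarith)
    nlinarith [h1, h2]
  have habe : PH * (lH' - lH) + PL * (lL' - lL) ≤ 1 - (PH * lH + PL * lL) := by
    have h1 : PH * (lH' - lH) ≤ PH * (1 - lH) :=
      mul_le_mul_of_nonneg_left (by linarith) hPH.le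
    have h2 : PL * (lL' - lL) ≤ PL * (1 - lL) :=
      mul_le_mul_of_nonneg_left (by linarith) hPL.le
    nlinarith [h1, h2]
  constructor
  · intro h1
    by_contra h2
    push_neg at h2
    exact claim2_aux B (1 - (PH * lH + PL * lL)) (PH * (lH' - lH)) (PL * (lL' - lL))
      p q r s hB he0 habe hp0 hpB hqB hq0 hpq hrB hr0 hs0 hsB hrs h1 h2
  · intro h1
    by_contra h2
    push_neg at h2
    exact claim2_aux B (1 - (PH * lH + PL * lL)) (PL * (lL' - lL)) (PH * (lH' - lH))
      s r q p hB he0 (by linarith) hs0 hsB hrB hr0 hrs hqB hq0 hp0 hpB hpq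
      (by linarith) (by linarith)
end

section
/- (Case 1 of Lemma 4: no agent gains much when both profiles have near-optimal fidelity.) Let B ≥ 1 be a real number, let P_H, P_L > 0 with P_H + P_L = 1, and let λ_H, λ_L, λ'_H, λ'_L ∈ [0,1]. Set e := 1 − (P_H·λ_H + P_L·λ_L) and suppose 1 − (P_H·λ'_H + P_L·λ'_L) ≤ (2B+2)·e. Then for every function v : {H,L} × {A,R} → [0,B], u' − u ≤ 2B(B+2)·e, where u = P_H·(λ_H·v(H,A) + (1−λ_H)·v(H,R)) + P_L·((1−λ_L)·v(L,A) + λ_L·v(L,R)) and u' is given by the same formula with λ'_H, λ'_L in place of λ_H, λ_L. -/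
set_option maxHeartbeats 1000000


/-- **Case 1 of Lemma 4.** If both profiles have near-optimal fidelity
(`lH`, `lL` are the probabilities that `A` wins given `H` and that `R` wins given `L`
under the first profile, with fidelity `1 − e`; `lH'`, `lL'` those of the deviating
profile, whose fidelity is at least `1 − (2B+2)e`), then no agent with utility
`v : state × outcome → [0,B]` (`true` = `H`, resp. `true` = `A`) gains more than
`2B(B+2)e` in expected utility. -/
theorem no_large_gain_when_both_fidelities_high
    (B PH PL lH lL lH' lL' : ℝ) (hB : 1 ≤ B)
    (hPH : 0 < PH) (hPL : 0 < PL) (hPsum : PH + PL = 1)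
    (hlH : lH ∈ Set.Icc (0 : ℝ) 1) (hlL : lL ∈ Set.Icc (0 : ℝ) 1)
    (hlH' : lH' ∈ Set.Icc (0 : ℝ) 1) (hlL' : lL' ∈ Set.Icc (0 : ℝ) 1)
    (hfid' : 1 - (PH * lH' + PL * lL') ≤ (2 * B + 2) * (1 - (PH * lH + PL * lL)))
    (v : Bool → Bool → ℝ) (hv0 : ∀ k o, 0 ≤ v k o) (hvB : ∀ k o, v k o ≤ B) :
    (PH * (lH' * v true true + (1 - lH') * v true false) +
        PL * ((1 - lL') * v false true + lL' * v false false)) -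
      (PH * (lH * v true true + (1 - lH) * v true false) +
        PL * ((1 - lL) * v false true + lL * v false false)) ≤
    2 * B * (B + 2) * (1 - (PH * lH + PL * lL)) := by
  obtain ⟨hlH0, hlH1⟩ := hlH
  obtain ⟨hlL0, hlL1⟩ := hlL
  obtain ⟨hlH0', hlH1'⟩ := hlH'
  obtain ⟨hlL0', hlL1'⟩ := hlL'
  set e : ℝ := 1 - (PH * lH + PL * lL) with he
  have he0 : 0 ≤ e := by nlinarith
  set a : ℝ := PH * (lH' - lH) with hadef
  set b : ℝ := PL * (lL' - lL) with hbdef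
  have ha1 : a ≤ e := by nlinarith
  have hb1 : b ≤ e := by nlinarith
  have hab : -(2 * B + 1) * e ≤ a + b := by
    simp only [hadef, hbdef, he]; nlinarith
  set d1 : ℝ := v true true - v true false with hd1def
  set d2 : ℝ := v false true - v false false with hd2def
  have hd1B : d1 ≤ B := by have := hvB true true; have := hv0 true false; simp [hd1def]; linarith
  have hd1B' : -B ≤ d1 := by have := hv0 true true; have := hvB true false; simp [hd1def]; linarith
  have hd2B : d2 ≤ B := by have := hvB false true; have := hv0 false false; simp [hd2def]; linarith
  have hd2B' : -B ≤ d2 := by have := hv0 false true; have := hvB false false; simp [hd2def]; linarith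
  have key : a * d1 - b * d2 ≤ 2 * B * (B + 2) * e := by
    have hB0 : (0:ℝ) < B := by linarith
    have hBe : 0 ≤ B * e := mul_nonneg hB0.le he0
    rcases le_or_gt 0 a with ha0 | ha0 <;> rcases le_or_gt 0 b with hb0 | hb0
    · have h1 : a * d1 ≤ a * B := mul_le_mul_of_nonneg_left hd1B ha0
      have h2 : -B ≤ d2 := hd2B'
      have h3 : b * (-B) ≤ b * d2 := mul_le_mul_of_nonneg_left h2 hb0
      have h4 : a * B ≤ e * B := mul_le_mul_of_nonneg_right ha1 hB0.le
      have h5 : b * B ≤ e * B := mul_le_mul_of_nonneg_right hb1 hB0.le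
      nlinarith [mul_nonneg (mul_nonneg hB0.le (by linarith : (0:ℝ) ≤ B + 1)) he0]
    · have hnb : 0 ≤ -b := by linarith
      have hnb2 : -b ≤ (2 * B + 2) * e := by linarith
      have h1 : a * d1 ≤ a * B := mul_le_mul_of_nonneg_left hd1B ha0
      have h4 : a * B ≤ e * B := mul_le_mul_of_nonneg_right ha1 hB0.le
      have h3 : (-b) * d2 ≤ (-b) * B := mul_le_mul_of_nonneg_left hd2B hnb
      have h5 : (-b) * B ≤ (2 * B + 2) * e * B := mul_le_mul_of_nonneg_right hnb2 hB0.le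
      nlinarith [hBe]
    · have hna : 0 ≤ -a := by linarith
      have hna2 : -a ≤ (2 * B + 2) * e := by linarith
      have h1 : (-a) * (-d1) ≤ (-a) * B := mul_le_mul_of_nonneg_left (by linarith : -d1 ≤ B) hna
      have h4 : (-a) * B ≤ (2 * B + 2) * e * B := mul_le_mul_of_nonneg_right hna2 hB0.le
      have h3 : b * (-B) ≤ b * d2 := mul_le_mul_of_nonneg_left hd2B' hb0
      have h5 : b * B ≤ e * B := mul_le_mul_of_nonneg_right hb1 hB0.le
      nlinarith [hBe]
    · have hna : 0 ≤ -a := by linarith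
      have hnb : 0 ≤ -b := by linarith
      have hsum : (-a) + (-b) ≤ (2 * B + 1) * e := by linarith
      have h1 : (-a) * (-d1) ≤ (-a) * B := mul_le_mul_of_nonneg_left (by linarith : -d1 ≤ B) hna
      have h3 : (-b) * d2 ≤ (-b) * B := mul_le_mul_of_nonneg_left hd2B hnb
      have h4 : ((-a) + (-b)) * B ≤ (2 * B + 1) * e * B := mul_le_mul_of_nonneg_right hsum hB0.le
      nlinarith [hBe]
  calc (PH * (lH' * v true true + (1 - lH') * v true false) +
        PL * ((1 - lL') * v false true + lL' * v false false)) -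
      (PH * (lH * v true true + (1 - lH) * v true false) +
        PL * ((1 - lL) * v false true + lL * v false false))
      = a * d1 - b * d2 := by simp only [hadef, hbdef, hd1def, hd2def]; ring
    _ ≤ 2 * B * (B + 2) * e := key
end

section
/- (Contingent utility gain from deviating to a high-fidelity profile.) Let B ≥ 1 be a real number, let P_H, P_L > 0 with P_H + P_L = 1, let δ ∈ (0,1], and let λ_H, λ_L, λ'_H, λ'_L ∈ [0,1]. Suppose λ_H ≤ 1 − δ or λ_L ≤ 1 − δ, and suppose λ'_H ≥ 1 − δ·P_H·P_L/(2B) and λ'_L ≥ 1 − δ·P_H·P_L/(2B). Then for all reals d_H, d_L ∈ [1, B]: P_H·(λ'_H − λ_H)·d_H + P_L·(λ'_L − λ_L)·d_L > δ·P_H·P_L/2. -/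
lemma aux_lb (ε B x x' d : ℝ) (hε : 0 ≤ ε) (hx : x ≤ 1) (hx' : 1 - ε ≤ x')
    (hd1 : 1 ≤ d) (hdB : d ≤ B) : -(ε * B) ≤ (x' - x) * d := by
  rcases le_or_gt x x' with h | h
  · nlinarith
  · nlinarith

/-- **Contingent utility gain from deviating to a high-fidelity profile.**
`lH` (resp. `lL`) is the probability that `A` wins given state `H` (resp. that `R` wins
given state `L`) under a profile `Σ`, and `lH'`, `lL'` those of a deviating profile `Σ'`
whose conditional success probabilities are within `δ·P_H·P_L/(2B)` of `1`.  For a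
contingent agent with utility gaps `dH, dL ∈ [1,B]`, the expected-utility gain
`u(Σ') − u(Σ)` exceeds `δ·P_H·P_L/2`. -/
theorem contingent_gain_from_high_fidelity_deviation
    (B PH PL δ lH lL lH' lL' : ℝ) (hB : 1 ≤ B)
    (hPH : 0 < PH) (hPL : 0 < PL) (hPsum : PH + PL = 1)
    (hδ0 : 0 < δ) (hδ1 : δ ≤ 1)
    (hlH : lH ∈ Set.Icc (0 : ℝ) 1) (hlL : lL ∈ Set.Icc (0 : ℝ) 1)
    (hlH' : lH' ∈ Set.Icc (0 : ℝ) 1) (hlL' : lL' ∈ Set.Icc (0 : ℝ) 1)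
    (hlow : lH ≤ 1 - δ ∨ lL ≤ 1 - δ)
    (hhighH : 1 - δ * PH * PL / (2 * B) ≤ lH')
    (hhighL : 1 - δ * PH * PL / (2 * B) ≤ lL') :
    ∀ dH dL : ℝ, 1 ≤ dH → dH ≤ B → 1 ≤ dL → dL ≤ B →
      δ * PH * PL / 2 < PH * (lH' - lH) * dH + PL * (lL' - lL) * dL := by
  intro dH dL hdH1 hdHB hdL1 hdLB
  set ε := δ * PH * PL / (2 * B) with hεdef
  have hB0 : (0:ℝ) < B := lt_of_lt_of_le one_pos hB
  have hε0 : 0 ≤ ε := by positivity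
  have hεB : ε * B = δ * PH * PL / 2 := by
    field_simp [hεdef]
    rw [hεdef, div_mul_eq_mul_div, div_mul_eq_mul_div, div_eq_iff (by positivity)]; ring
  have hεle : ε ≤ δ * PH * PL / 2 := by
    rw [← hεB]; nlinarith
  have hPL1 : PL < 1 := by linarith
  have hPP : PH * PL ≤ 1 := by nlinarith [sq_nonneg (PH - PL)]
  have hεδ : ε ≤ δ := by nlinarith [mul_le_mul_of_nonneg_left hPP hδ0.le]
  have hint : δ * PH * (1 - PL) > 0 :=
    mul_pos (mul_pos hδ0 hPH) (by linarith)
  have hint2 : PH * ε ≤ PH * (δ * PH * PL / 2) := mul_le_mul_of_nonneg_left hεle hPH.le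
  have hint3 : PL * ε ≤ PL * (δ * PH * PL / 2) := mul_le_mul_of_nonneg_left hεle hPL.le
  rcases hlow with h | h
  · have h1 : (δ - ε) ≤ (lH' - lH) * dH := by
      have hd : δ - ε ≤ lH' - lH := by linarith
      have h0 : 0 ≤ lH' - lH := by linarith
      calc δ - ε = (δ - ε) * 1 := by ring
        _ ≤ (lH' - lH) * dH := mul_le_mul hd hdH1 zero_le_one h0
    have h2 : -(ε * B) ≤ (lL' - lL) * dL := aux_lb ε B lL lL' dL hε0 hlL.2 hhighL hdL1 hdLB
    have e1 : PH * (δ - ε) ≤ PH * ((lH' - lH) * dH) := mul_le_mul_of_nonneg_left h1 hPH.le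
    have e2 : PL * (-(ε * B)) ≤ PL * ((lL' - lL) * dL) := mul_le_mul_of_nonneg_left h2 hPL.le
    have key : δ * PH * PL / 2 < PH * (δ - ε) + PL * (-(ε * B)) := by
      rw [hεB]; nlinarith [hint, hint2]
    calc δ * PH * PL / 2 < PH * (δ - ε) + PL * (-(ε * B)) := key
      _ ≤ PH * ((lH' - lH) * dH) + PL * ((lL' - lL) * dL) := by linarith
      _ = PH * (lH' - lH) * dH + PL * (lL' - lL) * dL := by ring
  · have h1 : (δ - ε) ≤ (lL' - lL) * dL := by
      have hd : δ - ε ≤ lL' - lL := by linarith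
      have h0 : 0 ≤ lL' - lL := by linarith
      calc δ - ε = (δ - ε) * 1 := by ring
        _ ≤ (lL' - lL) * dL := mul_le_mul hd hdL1 zero_le_one h0
    have h2 : -(ε * B) ≤ (lH' - lH) * dH := aux_lb ε B lH lH' dH hε0 hlH.2 hhighH hdH1 hdHB
    have e1 : PL * (δ - ε) ≤ PL * ((lL' - lL) * dL) := mul_le_mul_of_nonneg_left h1 hPL.le
    have e2 : PH * (-(ε * B)) ≤ PH * ((lH' - lH) * dH) := mul_le_mul_of_nonneg_left h2 hPH.le
    have key : δ * PH * PL / 2 < PL * (δ - ε) + PH * (-(ε * B)) := by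
      have t1 : δ*PH*PL*PL/2 + δ*PH*PH*PL/2 = δ*PH*PL/2 := by
        linear_combination (δ*PH*PL/2) * hPsum
      have t2 : δ*PH*PL < δ*PL := by
        nlinarith [mul_pos (mul_pos hδ0 hPL) (show (0:ℝ) < 1 - PH by linarith)]
      rw [hεB]; linarith [hint3, t1, t2]
    calc δ * PH * PL / 2 < PL * (δ - ε) + PH * (-(ε * B)) := key
      _ ≤ PH * ((lH' - lH) * dH) + PL * ((lL' - lL) * dL) := by linarith
      _ = PH * (lH' - lH) * dH + PL * (lL' - lL) * dL := by ring
end
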